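/- arXiv:1705.06796 — 6 statements merged into one kernel-verified Lean document; each statement's English description precedes it below -/
import Mathlib

section
/- Let G be a finite simple graph, X a subset of V(G), and ℓ a natural number. Then the auxiliary bipartite graph Ĝ(G,X) has a matching of cardinality ℓ if and only if there exists a simple graph H with vertex set X and exactly ℓ edges that appears as a 1-subdivision in G with the identity map on X as its nail map. -/
/-- Vertex set of the auxiliary bipartite graph `Ĝ(G,X)`: one side is `V(G) ∖ X`,
the other side is the set of unordered pairs of distinct vertices of `X`. -/
def AuxV (V : Type*) (X : Set V) : Type _ :=
  {v : V // v ∉ X} ⊕ {p : Sym2 V // ¬ p.IsDiag ∧ ∀ x ∈ p, x ∈ X}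

/-- The auxiliary bipartite graph `Ĝ(G,X)`: a vertex `v ∈ V(G) ∖ X` is adjacent to a
pair `{x,y}` of distinct vertices of `X` iff `v` is adjacent in `G` to both `x` and `y`. -/
def auxGraph {V : Type*} (G : SimpleGraph V) (X : Set V) : SimpleGraph (AuxV V X) :=
  SimpleGraph.fromRel (fun a b =>
    ∃ (v : {v : V // v ∉ X}) (p : {p : Sym2 V // ¬ p.IsDiag ∧ ∀ x ∈ p, x ∈ X}),
      a = Sum.inl v ∧ b = Sum.inr p ∧ ∀ x ∈ (p : Sym2 V), G.Adj (v : V) x)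

/-- `G` has a matching of cardinality `ℓ`. -/
def HasMatchingOfSize {W : Type*} (G : SimpleGraph W) (ℓ : ℕ) : Prop :=
  ∃ M : G.Subgraph, M.IsMatching ∧ M.edgeSet.ncard = ℓ

/-- The maximum matching number `ν(G)`. -/
noncomputable def matchingNumber {W : Type*} (G : SimpleGraph W) : ℕ :=
  sSup {ℓ : ℕ | HasMatchingOfSize G ℓ}

/-- `H` (a graph with vertex set `X`) appears as a `1`-subdivision in `G` with the
identity map on `X` as its nail map: every edge of `H` has both endpoints in `X`, and
there is an injective choice of subdivision vertices outside `X`, one per edge of `H`,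
each adjacent in `G` to both endpoints of its edge. -/
def Appears1SubdivId {V : Type*} (G H : SimpleGraph V) (X : Set V) : Prop :=
  (∀ v ∈ H.support, v ∈ X) ∧
  ∃ s : H.edgeSet → V, Function.Injective s ∧ (∀ e, s e ∉ X) ∧
    ∀ (e : H.edgeSet), ∀ v ∈ (e : Sym2 V), G.Adj (s e) v

/-- `H` (a graph with vertex set `X`) is a `½`-shallow topological minor of `G` with
the identity map on `X` as nail map: for each edge `uv` of `H`, either `uv` is an edge
of `G`, or there is a subdivision vertex outside `X` adjacent in `G` to both `u` and
`v`, these subdivision vertices being pairwise distinct. -/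
def HalfShallowTMId {V : Type*} (G H : SimpleGraph V) (X : Set V) : Prop :=
  (∀ v ∈ H.support, v ∈ X) ∧
  ∃ s : H.edgeSet → Option V,
    (∀ e₁ e₂ w, s e₁ = some w → s e₂ = some w → e₁ = e₂) ∧
    (∀ e w, s e = some w → w ∉ X ∧ ∀ v ∈ (e : Sym2 V), G.Adj w v) ∧
    (∀ e, s e = none → (e : Sym2 V) ∈ G.edgeSet)

/-- The graph `G'` obtained from `G` by subdividing exactly once every edge of `G`
with both endpoints in `X`: vertex set `V ⊕ {edges of G inside X}`. -/
def SubdivInV (V : Type*) (G : SimpleGraph V) (X : Set V) : Type _ :=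
  V ⊕ {e : Sym2 V // e ∈ G.edgeSet ∧ ∀ v ∈ e, v ∈ X}

/-- The graph obtained from `G` by subdividing exactly once every edge with both
endpoints in `X`. -/
def subdivIn {V : Type*} (G : SimpleGraph V) (X : Set V) : SimpleGraph (SubdivInV V G X) :=
  SimpleGraph.fromRel (fun a b =>
    (∃ u v : V, a = Sum.inl u ∧ b = Sum.inl v ∧ G.Adj u v ∧ ¬(u ∈ X ∧ v ∈ X)) ∨
    (∃ (u : V) (e : {e : Sym2 V // e ∈ G.edgeSet ∧ ∀ v ∈ e, v ∈ X}),
      a = Sum.inl u ∧ b = Sum.inr e ∧ u ∈ (e : Sym2 V)))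

/-! Both sides amount to a set `E` of pairs `(v, {x, y})`, with `v ∉ X` adjacent to `x` and `y`,
in which every `v` and every pair `{x, y}` occurs at most once. For a matching of `Ĝ(G,X)`, `E`
is its edge set; for a `1`-subdivision, `E` is the graph of the subdivision map `s`, and `H` is
recovered as the graph whose edges are the second components. -/

open SimpleGraph Function Set

section Bipartite

variable {α β : Type*}

def bipartiteOfRel (r : α → β → Prop) : SimpleGraph (α ⊕ β) :=
  fromRel fun u v => ∃ a b, u = Sum.inl a ∧ v = Sum.inr b ∧ r a b

def IsRelMatching (r : α → β → Prop) (E : Set (α × β)) : Prop :=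
  (∀ p ∈ E, r p.1 p.2) ∧ InjOn Prod.fst E ∧ InjOn Prod.snd E

def crossEdge (p : α × β) : Sym2 (α ⊕ β) := s(Sum.inl p.1, Sum.inr p.2)

lemma crossEdge_injective : Injective (crossEdge : α × β → Sym2 (α ⊕ β)) := by
  rintro ⟨a, b⟩ ⟨a', b'⟩ h
  simpa [crossEdge] using h

variable {r : α → β → Prop}

@[simp]
lemma bipartiteOfRel_adj_inl_inr {a : α} {b : β} :
    (bipartiteOfRel r).Adj (Sum.inl a) (Sum.inr b) ↔ r a b := by
  simp [bipartiteOfRel]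

lemma bipartiteOfRel_adj_cases {u v : α ⊕ β} (h : (bipartiteOfRel r).Adj u v) :
    ∃ a b, (u = Sum.inl a ∧ v = Sum.inr b) ∨ (u = Sum.inr b ∧ v = Sum.inl a) := by
  obtain ⟨-, ⟨a, b, rfl, rfl, -⟩ | ⟨a, b, rfl, rfl, -⟩⟩ := h
  exacts [⟨a, b, .inl ⟨rfl, rfl⟩⟩, ⟨a, b, .inr ⟨rfl, rfl⟩⟩]

lemma edgeSet_eq_image_crossEdge (M : (bipartiteOfRel r).Subgraph) :
    M.edgeSet = crossEdge '' {p | M.Adj (Sum.inl p.1) (Sum.inr p.2)} := by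
  ext e
  induction e using Sym2.ind with
  | _ u v =>
    refine ⟨fun h => ?_, ?_⟩
    · obtain ⟨a, b, ⟨rfl, rfl⟩ | ⟨rfl, rfl⟩⟩ := bipartiteOfRel_adj_cases h.adj_sub
      exacts [⟨(a, b), h, rfl⟩, ⟨(a, b), h.symm, Sym2.eq_swap⟩]
    · rintro ⟨p, hp, he⟩
      rwa [← he]

lemma SimpleGraph.Subgraph.IsMatching.isRelMatching {M : (bipartiteOfRel r).Subgraph} (hM : M.IsMatching) :
    IsRelMatching r {p | M.Adj (Sum.inl p.1) (Sum.inr p.2)} :=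
  ⟨fun _ hp => by simpa using hp.adj_sub,
    fun p hp q hq h => Prod.ext h (Sum.inr_injective (hM.eq_of_adj_left hp (h ▸ hq))),
    fun p hp q hq h => Prod.ext (Sum.inl_injective (hM.eq_of_adj_right hp (h ▸ hq))) h⟩

lemma IsRelMatching.hasMatchingOfSize {E : Set (α × β)} (hE : IsRelMatching r E) :
    HasMatchingOfSize (bipartiteOfRel r) E.ncard := by
  obtain ⟨hr, hfst, hsnd⟩ := hE
  have hadj (p : E) : (bipartiteOfRel r).Adj (Sum.inl p.1.1) (Sum.inr p.1.2) := by
    simpa using hr p p.2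
  refine ⟨⨆ p : E, (bipartiteOfRel r).subgraphOfAdj (hadj p),
    Subgraph.IsMatching.iSup (fun p => .subgraphOfAdj (hadj p)) fun p q hpq => ?_, ?_⟩
  · have h1 : q.1.1 ≠ p.1.1 := fun h => hpq (Subtype.ext (hfst q.2 p.2 h).symm)
    have h2 : q.1.2 ≠ p.1.2 := fun h => hpq (Subtype.ext (hsnd q.2 p.2 h).symm)
    simp [h1, h2]
  · simp only [Subgraph.edgeSet_iSup, edgeSet_subgraphOfAdj]
    change (⋃ p : E, {crossEdge p.1}).ncard = _
    rw [iUnion_singleton_eq_range, ncard_range_of_injective (f := fun p : E => crossEdge p.1)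
      (crossEdge_injective.comp Subtype.val_injective), Nat.card_coe_set_eq]

theorem hasMatchingOfSize_bipartiteOfRel_iff {ℓ : ℕ} :
    HasMatchingOfSize (bipartiteOfRel r) ℓ ↔ ∃ E, IsRelMatching r E ∧ E.ncard = ℓ := by
  constructor
  · rintro ⟨M, hM, rfl⟩
    refine ⟨_, hM.isRelMatching, ?_⟩
    rw [edgeSet_eq_image_crossEdge, ncard_image_of_injective _ crossEdge_injective]
  · rintro ⟨E, hE, rfl⟩
    exact hE.hasMatchingOfSize

end Bipartite

section Subdivision

variable {V : Type*} {G : SimpleGraph V} {X : Set V}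

variable (G X) in
def subdivRel (v : {v : V // v ∉ X}) (p : {p : Sym2 V // ¬ p.IsDiag ∧ ∀ x ∈ p, x ∈ X}) : Prop :=
  ∀ x ∈ (p : Sym2 V), G.Adj v x

lemma SimpleGraph.mem_support_of_mem_edgeSet {H : SimpleGraph V} {e : Sym2 V} (he : e ∈ H.edgeSet) {x : V}
    (hx : x ∈ e) : x ∈ H.support :=
  H.mem_support.2 ⟨Sym2.Mem.other hx, by rwa [← mem_edgeSet, Sym2.other_spec hx]⟩

lemma Appears1SubdivId.exists_isRelMatching {H : SimpleGraph V} (hH : Appears1SubdivId G H X) :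
    ∃ E, IsRelMatching (subdivRel G X) E ∧ E.ncard = H.edgeSet.ncard := by
  obtain ⟨hsupp, s, hs, hsX, hadj⟩ := hH
  let g (e : H.edgeSet) : {v : V // v ∉ X} × {p : Sym2 V // ¬ p.IsDiag ∧ ∀ x ∈ p, x ∈ X} :=
    (⟨s e, hsX e⟩, ⟨e, H.not_isDiag_of_mem_edgeSet e.2,
      fun x hx => hsupp x (mem_support_of_mem_edgeSet e.2 hx)⟩)
  have hg : Injective (Prod.fst ∘ g) := fun e e' h => hs (congrArg Subtype.val h)
  refine ⟨range g, ⟨?_, hg.injOn_range, ?_⟩, ?_⟩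
  · rintro _ ⟨e, rfl⟩
    exact hadj e
  · exact Injective.injOn_range (Injective.of_comp (f := Subtype.val) Subtype.val_injective)
  · rw [ncard_range_of_injective hg.of_comp, Nat.card_coe_set_eq]

lemma IsRelMatching.appears1SubdivId_fromEdgeSet {E : Set ({v : V // v ∉ X} × _)}
    (hE : IsRelMatching (subdivRel G X) E) :
    Appears1SubdivId G (fromEdgeSet ((fun q => (q.2 : Sym2 V)) '' E)) X ∧
      (fromEdgeSet ((fun q => (q.2 : Sym2 V)) '' E)).edgeSet.ncard = E.ncard := by
  obtain ⟨hadj, hfst, hsnd⟩ := hE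
  set F := (fun q => (q.2 : Sym2 V)) '' E
  have hF : (fromEdgeSet F).edgeSet = F := by
    rw [edgeSet_fromEdgeSet, sdiff_eq_left, Set.disjoint_left]
    rintro _ ⟨q, -, rfl⟩
    exact q.2.2.1
  have hedge (e : (fromEdgeSet F).edgeSet) : ∃ q ∈ E, (q.2 : Sym2 V) = e := hF.subset e.2
  choose q hqE hq using hedge
  refine ⟨⟨fun v ⟨w, hvw⟩ => ?_, fun e => (q e).1, fun e e' h => ?_, fun e => (q e).1.2,
    fun e x hx => hadj _ (hqE e) x (hq e ▸ hx)⟩, ?_⟩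
  · obtain ⟨q, -, hq⟩ : ∃ q ∈ E, (q.2 : Sym2 V) = s(v, w) := hF.subset hvw
    exact q.2.2.2 v (hq ▸ Sym2.mem_mk_left v w)
  · rw [Subtype.ext_iff, ← hq, ← hq, hfst (hqE e) (hqE e') (Subtype.ext h)]
  · rw [hF, InjOn.ncard_image fun a ha b hb h => hsnd ha hb (Subtype.ext h)]

end Subdivision

theorem stmt_1_general {V : Type} (G : SimpleGraph V) (X : Set V) (ℓ : ℕ) :
    HasMatchingOfSize (auxGraph G X) ℓ ↔
      ∃ H : SimpleGraph V, Appears1SubdivId G H X ∧ H.edgeSet.ncard = ℓ := by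
  refine (hasMatchingOfSize_bipartiteOfRel_iff (r := subdivRel G X)).trans ⟨?_, ?_⟩
  · rintro ⟨E, hE, rfl⟩
    exact ⟨_, hE.appears1SubdivId_fromEdgeSet⟩
  · rintro ⟨H, hH, rfl⟩
    exact hH.exists_isRelMatching

/-- For a finite simple graph `G`, `X ⊆ V(G)` and `ℓ : ℕ`, the auxiliary
bipartite graph `Ĝ(G,X)` has a matching of cardinality `ℓ` iff there is a simple graph
`H` with vertex set `X` and exactly `ℓ` edges appearing as a `1`-subdivision in `G`
with the identity map on `X` as its nail map. -/
theorem stmt_1 {V : Type} [Fintype V] (G : SimpleGraph V) (X : Set V) (ℓ : ℕ) :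
    HasMatchingOfSize (auxGraph G X) ℓ ↔
      ∃ H : SimpleGraph V, Appears1SubdivId G H X ∧ H.edgeSet.ncard = ℓ :=
  stmt_1_general G X ℓ
end

section
/- Let G be a finite simple graph, X a subset of V(G), and let G' be the graph obtained from G by subdividing exactly once every edge of G with both endpoints in X. Then for every natural number ℓ: G has a ½-shallow topological minor H with vertex set X, the identity map on X as nail map, and exactly ℓ edges, if and only if the auxiliary bipartite graph Ĝ(G',X) has a matching of cardinality ℓ. -/
/-!
An edge `xy` of `H` is realised either through a common neighbour `w ∉ X` of `x` and `y`, or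
directly by the edge `xy` of `G`. In `G'` the direct edges inside `X` are subdivided, and the
subdivision vertex of `xy` is again a common neighbour of `x` and `y` outside `X`. So realising
the edges of `H` is the same as giving the pairs in `E(H)` distinct partners in `Ĝ(G', X)`, that
is, a matching of `Ĝ(G', X)` that covers exactly those pairs; conversely, the pairs covered by a
matching of size `ℓ` are the edges of such an `H`.
-/

open Function

namespace Sym2

variable {α β : Type*}

theorem eq_of_forall_mem {z w : Sym2 α} (hz : ¬ z.IsDiag) (h : ∀ a ∈ z, a ∈ w) : z = w := by
  induction z using Sym2.ind with | _ x y =>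
  induction w using Sym2.ind with | _ a b =>
  have hx := h x (mem_mk_left x y)
  have hy := h y (mem_mk_right x y)
  simp only [mk_isDiag_iff, mem_iff] at hz hx hy
  rcases hx with rfl | rfl <;> rcases hy with rfl | rfl <;> simp_all [eq_swap]

theorem map_not_isDiag_and_forall_mem_image {φ : α → β} (hφ : Injective φ) {X : Set α}
    {e : Sym2 α} (he : ¬ e.IsDiag ∧ ∀ x ∈ e, x ∈ X) :
    ¬ (e.map φ).IsDiag ∧ ∀ y ∈ e.map φ, y ∈ φ '' X := by
  refine ⟨(isDiag_map hφ).not.mpr he.1, fun y hy => ?_⟩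
  obtain ⟨x, hx, rfl⟩ := mem_map.mp hy
  exact ⟨x, he.2 x hx, rfl⟩

theorem mem_range_map_of_forall_mem {φ : α → β} {p : Sym2 β} (h : ∀ y ∈ p, y ∈ Set.range φ) :
    p ∈ Set.range (Sym2.map φ) := by
  induction p using Sym2.ind with | _ a b =>
  obtain ⟨x, rfl⟩ := h a (mem_mk_left a b)
  obtain ⟨y, rfl⟩ := h b (mem_mk_right _ b)
  exact ⟨s(x, y), rfl⟩

end Sym2

namespace SimpleGraph

theorem edgeSet_comap {V W : Type*} (K : SimpleGraph W) (φ : V → W) :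
    (K.comap φ).edgeSet = Sym2.map φ ⁻¹' K.edgeSet := by
  ext e
  induction e using Sym2.ind with | _ x y => rfl

theorem edgeSet_comap_fromEdgeSet {V W : Type*} {T : Set (Sym2 W)}
    (hT : Disjoint T Sym2.diagSet) (φ : V → W) :
    ((fromEdgeSet T).comap φ).edgeSet = Sym2.map φ ⁻¹' T := by
  rw [edgeSet_comap, edgeSet_fromEdgeSet, sdiff_eq_left.mpr hT]

theorem not_isDiag_and_forall_mem_of_support_subset {V : Type*} {H : SimpleGraph V} {X : Set V}
    (hH : ∀ v ∈ H.support, v ∈ X) {e : Sym2 V} (he : e ∈ H.edgeSet) :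
    ¬ e.IsDiag ∧ ∀ x ∈ e, x ∈ X := by
  refine ⟨H.not_isDiag_of_mem_edgeSet he, fun x hx => hH x ?_⟩
  induction e using Sym2.ind with | _ u v =>
  rcases Sym2.mem_iff.mp hx with rfl | rfl
  exacts [Adj.mem_support_left he, Adj.mem_support_right he]

theorem hasMatchingOfSize_of_injective {W ι : Type*} {K : SimpleGraph W} {f g : ι → W}
    (hf : Injective f) (hg : Injective g) (hfg : ∀ i j, f i ≠ g j)
    (hadj : ∀ i, K.Adj (f i) (g i)) :
    HasMatchingOfSize K (Nat.card ι) := by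
  refine ⟨⨆ i, K.subgraphOfAdj (hadj i),
    Subgraph.IsMatching.iSup (fun i => Subgraph.IsMatching.subgraphOfAdj (hadj i)) ?_, ?_⟩
  · intro i j hij
    rw [support_subgraphOfAdj, support_subgraphOfAdj, Set.disjoint_left]
    rintro _ (rfl | rfl) (h | h)
    exacts [hij (hf h), hfg i j h, hfg j i h.symm, hij (hg h)]
  · have hinj : Injective fun i => s(f i, g i) := by
      intro i j h
      rcases Sym2.eq_iff.mp h with ⟨h, -⟩ | ⟨h, -⟩
      exacts [hf h, absurd h (hfg i j)]
    simp only [Subgraph.edgeSet_iSup, edgeSet_subgraphOfAdj, Set.iUnion_singleton_eq_range]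
    exact Set.ncard_range_of_injective hinj

theorem Subgraph.IsMatching.exists_injective_of_le_completeBipartiteGraph {α β : Type*}
    {K : SimpleGraph (α ⊕ β)} (hK : K ≤ completeBipartiteGraph α β) {M : K.Subgraph}
    (hM : M.IsMatching) :
    ∃ (S : Set β) (f : S → α), Injective f ∧ (∀ b, K.Adj (.inl (f b)) (.inr b)) ∧
      S.ncard = M.edgeSet.ncard := by
  set S : Set β := {b | .inr b ∈ M.verts}
  have hpartner : ∀ b : S, ∃ a, M.Adj (.inl a) (.inr b) := by
    intro b
    obtain ⟨a | b', hb, -⟩ := hM b.2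
    · exact ⟨a, hb.symm⟩
    · simpa using hK (M.adj_sub hb)
  choose f hf using hpartner
  refine ⟨S, f,
    fun b b' h => Subtype.ext (Sum.inr_injective (hM.eq_of_adj_left (hf b) (h ▸ hf b'))),
    fun b => M.adj_sub (hf b), ?_⟩
  refine Set.ncard_congr (fun b hb => s(.inl (f ⟨b, hb⟩), .inr b)) (fun b hb => hf ⟨b, hb⟩)
    (fun b b' hb hb' h => (by simpa using h : _ ∧ b = b').2) (fun e he => ?_)
  induction e using Sym2.ind with | _ x y =>
  have hxy : M.Adj x y := he
  rcases x with a | b <;> rcases y with a' | b'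
  · simpa using hK (M.adj_sub hxy)
  · refine ⟨b', M.edge_vert hxy.symm, ?_⟩
    rw [hM.eq_of_adj_right (hf ⟨b', _⟩) hxy]
  · refine ⟨b, M.edge_vert hxy, ?_⟩
    rw [hM.eq_of_adj_right (hf ⟨b, _⟩) hxy.symm, Sym2.eq_swap]
  · simpa using hK (M.adj_sub hxy)

section AuxGraph

variable {W : Type*} {K : SimpleGraph W} {Y : Set W}

theorem auxGraph_adj_inl_inr {v : {v : W // v ∉ Y}}
    {p : {p : Sym2 W // ¬ p.IsDiag ∧ ∀ x ∈ p, x ∈ Y}} :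
    (auxGraph K Y).Adj (Sum.inl v) (Sum.inr p) ↔ ∀ x ∈ (p : Sym2 W), K.Adj v x := by
  -- `AuxV W Y` (like `SubdivInV V G X`) is a sum type only after unfolding, so `rw` cannot match
  rw [auxGraph]; erw [fromRel_adj]
  constructor
  · rintro ⟨-, ⟨v', p', hv, hp, h⟩ | ⟨v', p', hp, -, -⟩⟩
    · cases Sum.inl.inj hv; cases Sum.inr.inj hp; exact h
    · exact absurd hp Sum.inr_ne_inl
  · exact fun h => ⟨Sum.inl_ne_inr, Or.inl ⟨v, p, rfl, rfl, h⟩⟩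

theorem auxGraph_le_completeBipartiteGraph (K : SimpleGraph W) (Y : Set W) :
    auxGraph K Y ≤ completeBipartiteGraph _ _ := by
  rintro _ _ ⟨-, ⟨v, p, rfl, rfl, -⟩ | ⟨v, p, rfl, rfl, -⟩⟩ <;> simp

end AuxGraph

variable {V : Type*} {G : SimpleGraph V} {X : Set V}

theorem subdivIn_adj_inl_inl {u v : V} :
    (subdivIn G X).Adj (Sum.inl u) (Sum.inl v) ↔ G.Adj u v ∧ ¬(u ∈ X ∧ v ∈ X) := by
  rw [subdivIn]; erw [fromRel_adj]
  constructor
  · rintro ⟨-, (⟨u', v', hu, hv, h, hX⟩ | ⟨_, _, _, he, -⟩) |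
      (⟨v', u', hv, hu, h, hX⟩ | ⟨_, _, _, he, -⟩)⟩
    · cases Sum.inl.inj hu; cases Sum.inl.inj hv; exact ⟨h, hX⟩
    · exact absurd he Sum.inl_ne_inr
    · cases Sum.inl.inj hu; cases Sum.inl.inj hv; exact ⟨h.symm, fun h' => hX h'.symm⟩
    · exact absurd he Sum.inl_ne_inr
  · exact fun ⟨h, hX⟩ =>
      ⟨fun h' => h.ne (Sum.inl.inj h'), Or.inl (Or.inl ⟨u, v, rfl, rfl, h, hX⟩)⟩

theorem subdivIn_adj_inr_inl {e : {e : Sym2 V // e ∈ G.edgeSet ∧ ∀ v ∈ e, v ∈ X}} {u : V} :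
    (subdivIn G X).Adj (Sum.inr e) (Sum.inl u) ↔ u ∈ (e : Sym2 V) := by
  rw [subdivIn]; erw [fromRel_adj]
  constructor
  · rintro ⟨-, (⟨_, _, he, -⟩ | ⟨_, _, he, -⟩) | (⟨_, _, -, he, -⟩ | ⟨u', e', hu, he, h⟩)⟩
    · exact absurd he Sum.inr_ne_inl
    · exact absurd he Sum.inr_ne_inl
    · exact absurd he Sum.inr_ne_inl
    · cases Sum.inl.inj hu; cases Sum.inr.inj he; exact h
  · exact fun h => ⟨Sum.inr_ne_inl, Or.inr (Or.inr ⟨u, e, rfl, rfl, h⟩)⟩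

theorem eq_of_forall_subdivIn_adj_inr {e : Sym2 V} (he : ¬ e.IsDiag)
    {f : {e : Sym2 V // e ∈ G.edgeSet ∧ ∀ v ∈ e, v ∈ X}}
    (h : ∀ u ∈ e, (subdivIn G X).Adj (Sum.inr f) (Sum.inl u)) : e = f :=
  Sym2.eq_of_forall_mem he fun u hu => subdivIn_adj_inr_inl.mp (h u hu)

theorem hasMatchingOfSize_of_halfShallowTMId {H : SimpleGraph V} (hH : HalfShallowTMId G H X) :
    HasMatchingOfSize (auxGraph (subdivIn G X) (Sum.inl '' X)) H.edgeSet.ncard := by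
  obtain ⟨hsupp, s, hs_inj, hs_some, hs_none⟩ := hH
  have hX (e : H.edgeSet) := not_isDiag_and_forall_mem_of_support_subset hsupp e.2
  have hpartner : ∀ e : H.edgeSet, ∃ c : SubdivInV V G X, c ∉ Sum.inl '' X ∧
      (∀ u ∈ (e : Sym2 V), (subdivIn G X).Adj c (Sum.inl u)) ∧ c.getLeft? = s e := by
    intro e
    cases hse : s e with
    | some w =>
      obtain ⟨hw, hadj⟩ := hs_some e w hse
      exact ⟨Sum.inl w, Sum.inl_injective.mem_set_image.not.mpr hw,
        fun u hu => subdivIn_adj_inl_inl.mpr ⟨hadj u hu, fun h => hw h.1⟩, rfl⟩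
    | none =>
      exact ⟨Sum.inr ⟨e, hs_none e hse, (hX e).2⟩, fun ⟨_, _, h⟩ => Sum.inl_ne_inr h,
        fun u hu => subdivIn_adj_inr_inl.mpr hu, rfl⟩
  choose c hcX hcadj hcs using hpartner
  have hc_inj : Injective c := by
    intro e₁ e₂ h
    cases hc : c e₁ with
    | inl w =>
      exact hs_inj e₁ e₂ w ((hcs e₁).symm.trans (congrArg _ hc))
        ((hcs e₂).symm.trans (congrArg _ (h.symm.trans hc)))
    | inr f =>
      have h₁ := eq_of_forall_subdivIn_adj_inr (hX e₁).1 (hc ▸ hcadj e₁)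
      have h₂ := eq_of_forall_subdivIn_adj_inr (hX e₂).1 (h.symm.trans hc ▸ hcadj e₂)
      exact Subtype.ext (h₁.trans h₂.symm)
  rw [← Nat.card_coe_set_eq]
  refine hasMatchingOfSize_of_injective
    (f := fun e => Sum.inl ⟨c e, hcX e⟩)
    (g := fun e => Sum.inr ⟨(e : Sym2 V).map Sum.inl,
      Sym2.map_not_isDiag_and_forall_mem_image Sum.inl_injective (hX e)⟩)
    (fun e₁ e₂ h => hc_inj (congrArg Subtype.val (Sum.inl_injective h)))
    (fun e₁ e₂ h => Subtype.ext (Sym2.map.injective Sum.inl_injective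
      (congrArg Subtype.val (Sum.inr_injective h))))
    (fun _ _ => Sum.inl_ne_inr) (fun e => auxGraph_adj_inl_inr.mpr fun x hx => ?_)
  obtain ⟨u, hu, rfl⟩ := Sym2.mem_map.mp hx
  exact hcadj e u hu

theorem exists_halfShallowTMId_of_injective
    {S : Set {p : Sym2 (SubdivInV V G X) // ¬ p.IsDiag ∧ ∀ x ∈ p, x ∈ Sum.inl '' X}}
    {f : S → {c : SubdivInV V G X // c ∉ Sum.inl '' X}} (hf : Injective f)
    (hadj : ∀ b, (auxGraph (subdivIn G X) (Sum.inl '' X)).Adj (Sum.inl (f b)) (Sum.inr b.1)) :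
    ∃ H : SimpleGraph V, HalfShallowTMId G H X ∧ H.edgeSet.ncard = S.ncard := by
  set H := (fromEdgeSet (Subtype.val '' S)).comap (Sum.inl : V → SubdivInV V G X)
  have hH : H.edgeSet = Sym2.map Sum.inl ⁻¹' (Subtype.val '' S) := by
    refine edgeSet_comap_fromEdgeSet (Set.disjoint_left.mpr ?_) _
    rintro _ ⟨q, -, rfl⟩
    exact q.2.1
  have hlift (e : H.edgeSet) : ∃ p ∈ S, (p : Sym2 (SubdivInV V G X)) = e.val.map Sum.inl :=
    hH.subset e.2
  choose p hpS hp using hlift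
  set c : H.edgeSet → SubdivInV V G X := fun e => f ⟨p e, hpS e⟩
  have hcadj : ∀ e : H.edgeSet, ∀ u ∈ (e : Sym2 V), (subdivIn G X).Adj (c e) (Sum.inl u) :=
    fun e u hu => auxGraph_adj_inl_inr.mp (hadj ⟨p e, hpS e⟩) _
      (hp e ▸ Sym2.mem_map.mpr ⟨u, hu, rfl⟩)
  have hsupp : ∀ v ∈ H.support, v ∈ X := by
    rintro v ⟨w, ⟨⟨q, hq, hqv⟩, -⟩⟩
    obtain ⟨x, hx, hxv⟩ := q.2.2 (Sum.inl v) (hqv ▸ Sym2.mem_mk_left _ _)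
    exact Sum.inl_injective hxv ▸ hx
  refine ⟨H, ⟨hsupp, fun e => (c e).getLeft?, ?_, ?_, ?_⟩, ?_⟩
  · intro e₁ e₂ w h₁ h₂
    have hc : c e₁ = c e₂ :=
      (Sum.getLeft?_eq_some_iff.mp h₁).trans (Sum.getLeft?_eq_some_iff.mp h₂).symm
    have hpe : p e₁ = p e₂ := congrArg Subtype.val (hf (Subtype.ext hc))
    exact Subtype.ext (Sym2.map.injective Sum.inl_injective ((hp e₁).symm.trans (hpe ▸ hp e₂)))
  · intro e w hw
    have hcw : c e = Sum.inl w := Sum.getLeft?_eq_some_iff.mp hw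
    have hcX : c e ∉ Sum.inl '' X := (f ⟨p e, hpS e⟩).2
    exact ⟨fun hwX => hcX (hcw ▸ ⟨w, hwX, rfl⟩),
      fun u hu => (subdivIn_adj_inl_inl.mp (hcw ▸ hcadj e u hu)).1⟩
  · intro e he
    obtain ⟨f', hf'⟩ := Sum.isRight_iff.mp (Sum.getLeft?_eq_none_iff.mp he)
    have hef : (e : Sym2 V) = f' :=
      eq_of_forall_subdivIn_adj_inr (H.not_isDiag_of_mem_edgeSet e.2) (hf' ▸ hcadj e)
    exact hef ▸ f'.2.1
  · rw [hH, Set.ncard_preimage_of_injective_subset_range (Sym2.map.injective Sum.inl_injective)]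
    · exact Set.ncard_image_of_injective _ Subtype.val_injective
    rintro _ ⟨q, -, rfl⟩
    exact Sym2.mem_range_map_of_forall_mem fun y hy => Set.image_subset_range _ _ (q.2.2 y hy)

end SimpleGraph

theorem stmt_3_general {V : Type} (G : SimpleGraph V) (X : Set V) (ℓ : ℕ) :
    (∃ H : SimpleGraph V, HalfShallowTMId G H X ∧ H.edgeSet.ncard = ℓ) ↔
      HasMatchingOfSize (auxGraph (subdivIn G X) (Sum.inl '' X)) ℓ := by
  constructor
  · rintro ⟨H, hH, rfl⟩
    exact SimpleGraph.hasMatchingOfSize_of_halfShallowTMId hH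
  · rintro ⟨M, hM, rfl⟩
    obtain ⟨S, f, hf, hadj, hS⟩ := hM.exists_injective_of_le_completeBipartiteGraph
      (SimpleGraph.auxGraph_le_completeBipartiteGraph _ _)
    exact hS ▸ SimpleGraph.exists_halfShallowTMId_of_injective hf hadj

/-- For a finite simple graph `G`, `X ⊆ V(G)`, and `G'` obtained from
`G` by subdividing exactly once every edge with both endpoints in `X`: for every
`ℓ : ℕ`, `G` has a `½`-shallow topological minor `H` with vertex set `X`, identity
nail map and exactly `ℓ` edges iff `Ĝ(G',X)` has a matching of cardinality `ℓ`. -/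
theorem stmt_3 {V : Type} [Fintype V] (G : SimpleGraph V) (X : Set V) (ℓ : ℕ) :
    (∃ H : SimpleGraph V, HalfShallowTMId G H X ∧ H.edgeSet.ncard = ℓ) ↔
      HasMatchingOfSize (auxGraph (subdivIn G X) (Sum.inl '' X)) ℓ :=
  stmt_3_general G X ℓ
end

section
/- If ψ has a 1-in-3 satisfying assignment, then there exists a graph H with exactly 2m+1 vertices and 5m edges that appears as a 1-subdivision in G(ψ); in particular, G(ψ) has a ½-shallow topological minor of density 5m/(2m+1). -/
/-- The density `‖G‖/|G|` of a finite simple graph. -/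
noncomputable def graphDensity {V : Type*} (G : SimpleGraph V) : ℚ :=
  (G.edgeSet.ncard : ℚ) / (Nat.card V : ℚ)

/-- A model of a topological minor `H` inside `G`: an injective nail map together
with, for every edge of `H`, a path in `G` between the corresponding nails; the
paths are pairwise internally disjoint and their internal vertices avoid the nails. -/
structure SubdivModel {VH VG : Type*} (H : SimpleGraph VH) (G : SimpleGraph VG) where
  nail : VH → VG
  nail_inj : Function.Injective nail
  path : ∀ u v : VH, H.Adj u v → G.Walk (nail u) (nail v)
  path_isPath : ∀ u v (h : H.Adj u v), (path u v h).IsPath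
  path_symm : ∀ u v (h : H.Adj u v), path v u h.symm = (path u v h).reverse
  internal_not_nail : ∀ u v (h : H.Adj u v), ∀ w ∈ (path u v h).support,
    w ≠ nail u → w ≠ nail v → ∀ x, w ≠ nail x
  paths_disjoint : ∀ u v (h : H.Adj u v), ∀ u' v' (h' : H.Adj u' v'),
    s(u, v) ≠ s(u', v') → ∀ w, w ∈ (path u v h).support → w ∈ (path u' v' h').support →
      (w = nail u ∨ w = nail v) ∧ (w = nail u' ∨ w = nail v')

/-- `H` appears as a `k`-subdivision in `G`: the graph obtained from `H` by
subdividing every edge exactly `k` times is isomorphic to a subgraph of `G`,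
i.e. there is a model all of whose paths have length exactly `k + 1`. -/
def AppearsAsSubdivision (k : ℕ) {VH VG : Type*} (H : SimpleGraph VH) (G : SimpleGraph VG) :
    Prop :=
  ∃ M : SubdivModel H G, ∀ u v (h : H.Adj u v), (M.path u v h).length = k + 1

/-- `H` is an `r/2`-shallow topological minor of `G`: a graph obtained from `H` by
subdividing each edge at most `r` times is isomorphic to a subgraph of `G`,
i.e. there is a model all of whose paths have length at most `r + 1`. -/
def IsShallowTopMinor (r : ℕ) {VH VG : Type*} (H : SimpleGraph VH) (G : SimpleGraph VG) :
    Prop :=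
  ∃ M : SubdivModel H G, ∀ u v (h : H.Adj u v), (M.path u v h).length ≤ r + 1

/-- A CNF formula with `m` clauses over `p` (positive) variables, each clause consisting
of exactly three distinct positive literals and every variable occurring in at least
three clauses. -/
structure PosCnf (p m : ℕ) where
  clause : Fin m → Finset (Fin p)
  card_eq : ∀ i, (clause i).card = 3
  freq : ∀ v : Fin p, 3 ≤ (Finset.univ.filter (fun i => v ∈ clause i)).card

/-- `σ` is a 1-in-3 satisfying assignment for `ψ`: every clause contains exactly one
true variable. -/
def PosCnf.Sat1in3 {p m : ℕ} (ψ : PosCnf p m) (σ : Fin p → Bool) : Prop :=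
  ∀ i, ((ψ.clause i).filter (fun v => σ v = true)).card = 1

/-- Occurrences of variables in clauses of `ψ`. -/
def PosCnf.Occ {p m : ℕ} (ψ : PosCnf p m) : Type :=
  {q : Fin m × Fin p // q.2 ∈ ψ.clause q.1}

/-- `succ` arranges, for each variable, its occurrences into a single cycle: it is a
permutation of occurrences preserving the variable whose restriction to the
occurrences of each variable is one cycle. -/
def CycleData {p m : ℕ} (ψ : PosCnf p m) (succ : Equiv.Perm ψ.Occ) : Prop :=
  (∀ o : ψ.Occ, (succ o).1.2 = o.1.2) ∧
  (∀ o o' : ψ.Occ, o.1.2 = o'.1.2 → succ.SameCycle o o')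

/-- Vertices of the graph `G(ψ)`: `none` is the apex `a`; `some (inl o)` is the white
vertex for the occurrence `o`; `some (inr (inl i))` is the gray vertex of clause `i`;
`some (inr (inr (o, true)))` is the black vertex subdividing the apex–white(`o`) edge;
`some (inr (inr (o, false)))` is the black vertex subdividing the cycle edge from
white(`o`) to white(`succ o`). -/
def GPsiV {p m : ℕ} (ψ : PosCnf p m) : Type :=
  Option (ψ.Occ ⊕ Fin m ⊕ ψ.Occ × Bool)

/-- The graph `G(ψ)` of the reduction (for `r` odd, `r = 1`): variable cycles `D_i`
(one white vertex per occurrence), an apex `a` joined to all white vertices, one gray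
vertex per clause joined to the three corresponding white vertices, and every cycle
edge and apex edge subdivided exactly once by a black vertex. -/
def GPsi {p m : ℕ} (ψ : PosCnf p m) (succ : Equiv.Perm ψ.Occ) : SimpleGraph (GPsiV ψ) :=
  SimpleGraph.fromRel (fun x y =>
    -- apex  — black subdividing an apex edge
    (∃ o : ψ.Occ, x = none ∧ y = some (Sum.inr (Sum.inr (o, true)))) ∨
    -- white(o) — black subdividing the apex edge at o
    (∃ o : ψ.Occ, x = some (Sum.inl o) ∧ y = some (Sum.inr (Sum.inr (o, true)))) ∨
    -- white(o) — black subdividing the cycle edge (o, succ o)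
    (∃ o : ψ.Occ, x = some (Sum.inl o) ∧ y = some (Sum.inr (Sum.inr (o, false)))) ∨
    -- white(succ o) — black subdividing the cycle edge (o, succ o)
    (∃ o : ψ.Occ, x = some (Sum.inl (succ o)) ∧ y = some (Sum.inr (Sum.inr (o, false)))) ∨
    -- white(o) — gray vertex of the clause of o
    (∃ o : ψ.Occ, x = some (Sum.inl o) ∧ y = some (Sum.inr (Sum.inl o.1.1))))

/-!
Fix a 1-in-3 satisfying assignment `σ`. The graph `H` has as vertices the apex and the white
vertices of the false occurrences; there are two of these per clause, hence `2m + 1` vertices.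
Its `5m` edges are: the apex to every false occurrence (through the black vertex of that apex
edge), every false occurrence to the next occurrence of its variable (which is false as well;
through the black vertex of that cycle edge), and the two false occurrences of every clause
(through the gray vertex of the clause). Every edge is thus a path of length two in `G(ψ)`
through a middle vertex of its own. The cycle edges are genuine and pairwise distinct because
every variable occurs at least three times, so `succ` has no cycles of length one or two.
-/

open SimpleGraph Function

theorem AppearsAsSubdivision.isShallowTopMinor {VH VG : Type*} {H : SimpleGraph VH}
    {G : SimpleGraph VG} {k : ℕ} (h : AppearsAsSubdivision k H G) : IsShallowTopMinor k H G :=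
  let ⟨M, hM⟩ := h
  ⟨M, fun u v huv => (hM u v huv).le⟩

lemma SimpleGraph.Walk.cons_cons_nil_congr {V : Type*} {G : SimpleGraph V} {a b w w' : V}
    (hw : w = w') (h₁ : G.Adj a w) (h₂ : G.Adj w b) (h₁' : G.Adj a w') (h₂' : G.Adj w' b) :
    (cons h₁ (cons h₂ nil) : G.Walk a b) = cons h₁' (cons h₂' nil) := by
  subst hw
  rfl

theorem appearsAsSubdivision_one_of_midpoints {VH VG : Type*} {H : SimpleGraph VH}
    {G : SimpleGraph VG} (nail : VH → VG) (hnail : Injective nail) (mid : H.edgeSet → VG)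
    (hmid : Injective mid) (hmid_ne : ∀ e x, mid e ≠ nail x)
    (hadj : ∀ u v (h : H.Adj u v), G.Adj (nail u) (mid ⟨s(u, v), h⟩)) :
    AppearsAsSubdivision 1 H G := by
  have hswap (u v : VH) (h : H.Adj u v) : mid ⟨s(v, u), h.symm⟩ = mid ⟨s(u, v), h⟩ :=
    congrArg mid (Subtype.ext Sym2.eq_swap)
  have hadj' (u v : VH) (h : H.Adj u v) : G.Adj (mid ⟨s(u, v), h⟩) (nail v) :=
    hswap u v h ▸ (hadj v u h.symm).symm
  have hsupp (u v : VH) (h : H.Adj u v) (w : VG) :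
      w ∈ (Walk.cons (hadj u v h) (Walk.cons (hadj' u v h) Walk.nil)).support ↔
        w = nail u ∨ w = mid ⟨s(u, v), h⟩ ∨ w = nail v := by
    simp
  refine ⟨⟨nail, hnail, fun u v h => Walk.cons (hadj u v h) (Walk.cons (hadj' u v h) Walk.nil),
    ?_, ?_, ?_, ?_⟩, ?_⟩
  · intro u v h
    have hu := (hmid_ne ⟨s(u, v), h⟩ u).symm
    have hv := hmid_ne ⟨s(u, v), h⟩ v
    simp [Walk.isPath_def, hu, hv, hnail.ne h.ne]
  · intro u v h
    exact Walk.cons_cons_nil_congr (hswap u v h) _ _ _ _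
  · intro u v h w hw hu hv x
    rcases (hsupp u v h w).1 hw with rfl | rfl | rfl
    exacts [absurd rfl hu, hmid_ne _ x, absurd rfl hv]
  · intro u v h u' v' h' hne w hw hw'
    have hw_mid : w ≠ mid ⟨s(u, v), h⟩ := by
      rintro rfl
      rcases (hsupp u' v' h' _).1 hw' with h₁ | h₁ | h₁
      exacts [hmid_ne _ _ h₁, hne (congrArg Subtype.val (hmid h₁)), hmid_ne _ _ h₁]
    have hw'_mid : w ≠ mid ⟨s(u', v'), h'⟩ := by
      rintro rfl
      rcases (hsupp u v h _).1 hw with h₁ | h₁ | h₁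
      exacts [hmid_ne _ _ h₁, hne (congrArg Subtype.val (hmid h₁)).symm, hmid_ne _ _ h₁]
    rw [hsupp] at hw hw'
    exact ⟨hw.imp_right (Or.resolve_left · hw_mid), hw'.imp_right (Or.resolve_left · hw'_mid)⟩
  · intro u v h
    rfl

theorem appearsAsSubdivision_one_fromEdgeSet_range {VH VG E : Type*} {G : SimpleGraph VG}
    (ends : E → Sym2 VH) (nail : VH → VG) (hnail : Injective nail)
    (mid : E → VG) (hmid : Injective mid) (hmid_ne : ∀ i x, mid i ≠ nail x)
    (hadj : ∀ i, ∀ u ∈ ends i, G.Adj (nail u) (mid i)) :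
    AppearsAsSubdivision 1 (fromEdgeSet (Set.range ends)) G := by
  have hrange (e : (fromEdgeSet (Set.range ends)).edgeSet) : e.1 ∈ Set.range ends := by
    obtain ⟨e, he⟩ := e
    rw [edgeSet_fromEdgeSet] at he
    exact he.1
  choose idx hidx using hrange
  refine appearsAsSubdivision_one_of_midpoints nail hnail (mid ∘ idx) ?_ (fun e => hmid_ne _) ?_
  · exact hmid.comp fun e e' he => Subtype.ext ((hidx e).symm.trans (he ▸ hidx e'))
  · intro u v h
    exact hadj _ u (hidx ⟨s(u, v), h⟩ ▸ Sym2.mem_mk_left u v)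

theorem ncard_edgeSet_fromEdgeSet_range {V E : Type*} [Finite E] (ends : E → Sym2 V)
    (hends : Injective ends) (hdiag : ∀ i, ¬ (ends i).IsDiag) :
    (fromEdgeSet (Set.range ends)).edgeSet.ncard = Nat.card E := by
  have : Set.range ends \ Sym2.diagSet = Set.range ends :=
    sdiff_eq_left.2 (Set.disjoint_left.2 fun e ⟨i, hi⟩ hd => hdiag i (hi ▸ hd))
  rw [edgeSet_fromEdgeSet, this, ← Nat.card_coe_set_eq, Nat.card_range_of_injective hends]

lemma CycleData.apply_apply_ne {p m : ℕ} {ψ : PosCnf p m} {succ : Equiv.Perm ψ.Occ}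
    (hsucc : CycleData ψ succ) (o : ψ.Occ) : succ (succ o) ≠ o := by
  intro h
  have hsub : Finset.univ.filter (fun i => o.1.2 ∈ ψ.clause i) ⊆ {o.1.1, (succ o).1.1} := by
    intro i hi
    obtain ⟨n, hn⟩ := hsucc.2 o ⟨(i, o.1.2), (Finset.mem_filter.1 hi).2⟩ rfl
    rcases Equiv.Perm.zpow_apply_eq_of_apply_apply_eq_self h n with h' | h' <;> rw [hn] at h'
    · simp [show i = o.1.1 from congrArg (·.1.1) h']
    · simp [show i = (succ o).1.1 from congrArg (·.1.1) h']
  have := (Finset.card_le_card hsub).trans Finset.card_le_two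
  have := ψ.freq o.1.2
  omega

lemma CycleData.apply_ne {p m : ℕ} {ψ : PosCnf p m} {succ : Equiv.Perm ψ.Occ}
    (hsucc : CycleData ψ succ) (o : ψ.Occ) : succ o ≠ o :=
  fun h => hsucc.apply_apply_ne o (by rw [h, h])

namespace PosCnf

open Finset Sum

variable {p m : ℕ} (ψ : PosCnf p m)

instance : Fintype ψ.Occ :=
  inferInstanceAs (Fintype {q : Fin m × Fin p // q.2 ∈ ψ.clause q.1})

instance : DecidableEq ψ.Occ :=
  inferInstanceAs (DecidableEq {q : Fin m × Fin p // q.2 ∈ ψ.clause q.1})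

variable {ψ} {succ : Equiv.Perm ψ.Occ}

lemma gPsi_adj_apex_black (o : ψ.Occ) : (GPsi ψ succ).Adj none (some (inr (inr (o, true)))) :=
  (fromRel_adj _ _ _).2 ⟨nofun, .inl (.inl ⟨o, rfl, rfl⟩)⟩

lemma gPsi_adj_white_apexBlack (o : ψ.Occ) :
    (GPsi ψ succ).Adj (some (inl o)) (some (inr (inr (o, true)))) :=
  (fromRel_adj _ _ _).2 ⟨nofun, .inl (.inr (.inl ⟨o, rfl, rfl⟩))⟩

lemma gPsi_adj_white_cycleBlack (o : ψ.Occ) :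
    (GPsi ψ succ).Adj (some (inl o)) (some (inr (inr (o, false)))) :=
  (fromRel_adj _ _ _).2 ⟨nofun, .inl (.inr (.inr (.inl ⟨o, rfl, rfl⟩)))⟩

lemma gPsi_adj_succ_white_cycleBlack (o : ψ.Occ) :
    (GPsi ψ succ).Adj (some (inl (succ o))) (some (inr (inr (o, false)))) :=
  (fromRel_adj _ _ _).2 ⟨nofun, .inl (.inr (.inr (.inr (.inl ⟨o, rfl, rfl⟩))))⟩

lemma gPsi_adj_white_gray (o : ψ.Occ) :
    (GPsi ψ succ).Adj (some (inl o)) (some (inr (inl o.1.1))) :=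
  (fromRel_adj _ _ _).2 ⟨nofun, .inl (.inr (.inr (.inr (.inr ⟨o, rfl, rfl⟩))))⟩

variable (ψ) (σ : Fin p → Bool)

abbrev FalseOcc : Type := {o : ψ.Occ // σ o.1.2 = false}

def falseOccsOf (i : Fin m) : Finset (ψ.FalseOcc σ) := univ.filter (·.1.1.1 = i)

variable {ψ σ}

@[simp]
lemma mem_falseOccsOf {i : Fin m} {o : ψ.FalseOcc σ} : o ∈ ψ.falseOccsOf σ i ↔ o.1.1.1 = i := by
  simp [falseOccsOf]

lemma card_falseOccsOf (hσ : ψ.Sat1in3 σ) (i : Fin m) : #(ψ.falseOccsOf σ i) = 2 := by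
  have hvars : #(ψ.falseOccsOf σ i) = #((ψ.clause i).filter (σ · = false)) := by
    refine card_nbij (·.1.1.2) (fun o ho => ?_) (fun o ho o' ho' h => ?_) (fun v hv => ?_)
    · exact mem_filter.2 ⟨mem_falseOccsOf.1 ho ▸ o.1.2, o.2⟩
    · exact Subtype.ext <| Subtype.ext <|
        Prod.ext ((mem_falseOccsOf.1 ho).trans (mem_falseOccsOf.1 ho').symm) h
    · exact ⟨⟨⟨(i, v), (mem_filter.1 hv).1⟩, (mem_filter.1 hv).2⟩, mem_falseOccsOf.2 rfl, rfl⟩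
  have := card_filter_add_card_filter_not (s := ψ.clause i) (p := (σ · = true))
  simp only [Bool.not_eq_true] at this
  rw [hvars]
  have := hσ i
  have := ψ.card_eq i
  omega

lemma card_falseOcc (hσ : ψ.Sat1in3 σ) : Nat.card (ψ.FalseOcc σ) = 2 * m := by
  rw [Nat.card_eq_fintype_card, ← card_univ,
    card_eq_sum_card_fiberwise (f := (·.1.1.1)) (t := univ) (fun _ _ => mem_univ _)]
  calc ∑ i, #(ψ.falseOccsOf σ i)
      = ∑ _ : Fin m, 2 := sum_congr rfl fun i _ => card_falseOccsOf hσ i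
    _ = 2 * m := by simp [mul_comm]

lemma exists_falseOcc_pair (hσ : ψ.Sat1in3 σ) (i : Fin m) :
    ∃ ab : ψ.FalseOcc σ × ψ.FalseOcc σ,
      ab.1.1.1.1 = i ∧ ab.2.1.1.1 = i ∧ ab.1.1.1.2 ≠ ab.2.1.1.2 := by
  obtain ⟨a, b, hab, hi⟩ := card_eq_two.1 (card_falseOccsOf hσ i)
  have ha : a.1.1.1 = i := mem_falseOccsOf.1 (by simp [hi])
  have hb : b.1.1.1 = i := mem_falseOccsOf.1 (by simp [hi])
  refine ⟨(a, b), ha, hb, fun hv => hab ?_⟩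
  exact Subtype.ext <| Subtype.ext <| Prod.ext (ha.trans hb.symm) hv

noncomputable def clausePair (hσ : ψ.Sat1in3 σ) (i : Fin m) : ψ.FalseOcc σ × ψ.FalseOcc σ :=
  (exists_falseOcc_pair hσ i).choose

lemma clausePair_spec (hσ : ψ.Sat1in3 σ) (i : Fin m) :
    (clausePair hσ i).1.1.1.1 = i ∧ (clausePair hσ i).2.1.1.1 = i ∧
      (clausePair hσ i).1.1.1.2 ≠ (clausePair hσ i).2.1.1.2 :=
  (exists_falseOcc_pair hσ i).choose_spec

def falseSucc (hsucc : CycleData ψ succ) (o : ψ.FalseOcc σ) : ψ.FalseOcc σ :=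
  ⟨succ o.1, by rw [hsucc.1]; exact o.2⟩

noncomputable def edgeEnds (hsucc : CycleData ψ succ) (hσ : ψ.Sat1in3 σ) :
    ψ.FalseOcc σ ⊕ ψ.FalseOcc σ ⊕ Fin m → Sym2 (Option (ψ.FalseOcc σ))
  | inl o => s(none, some o)
  | inr (inl o) => s(some o, some (falseSucc hsucc o))
  | inr (inr i) => s(some (clausePair hσ i).1, some (clausePair hσ i).2)

def edgeMid : ψ.FalseOcc σ ⊕ ψ.FalseOcc σ ⊕ Fin m → Option (ψ.Occ ⊕ Fin m ⊕ ψ.Occ × Bool)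
  | inl o => some (inr (inr (o.1, true)))
  | inr (inl o) => some (inr (inr (o.1, false)))
  | inr (inr i) => some (inr (inl i))

def whiteNail : Option (ψ.FalseOcc σ) → Option (ψ.Occ ⊕ Fin m ⊕ ψ.Occ × Bool) :=
  Option.map (inl ·.1)

noncomputable def falseGraph (hsucc : CycleData ψ succ) (hσ : ψ.Sat1in3 σ) :
    SimpleGraph (Option (ψ.FalseOcc σ)) :=
  fromEdgeSet (Set.range (edgeEnds hsucc hσ))

lemma whiteNail_injective : Injective (whiteNail (ψ := ψ) (σ := σ)) :=
  Option.map_injective fun _ _ h => Subtype.ext (inl_injective h)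

lemma edgeMid_injective : Injective (edgeMid (ψ := ψ) (σ := σ)) := by
  rintro (o | o | i) (o' | o' | i') h <;> simp_all [edgeMid, Subtype.ext_iff]

lemma edgeMid_ne_whiteNail (e : ψ.FalseOcc σ ⊕ ψ.FalseOcc σ ⊕ Fin m)
    (x : Option (ψ.FalseOcc σ)) : edgeMid e ≠ whiteNail x := by
  rcases e with o | o | i <;> cases x <;> simp [edgeMid, whiteNail]

lemma adj_whiteNail_edgeMid (hsucc : CycleData ψ succ) (hσ : ψ.Sat1in3 σ)
    (e : ψ.FalseOcc σ ⊕ ψ.FalseOcc σ ⊕ Fin m) (x : Option (ψ.FalseOcc σ))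
    (hx : x ∈ edgeEnds hsucc hσ e) : (GPsi ψ succ).Adj (whiteNail x) (edgeMid e) := by
  rcases e with o | o | i <;> simp only [edgeEnds, Sym2.mem_iff] at hx <;>
    rcases hx with rfl | rfl
  · exact gPsi_adj_apex_black o.1
  · exact gPsi_adj_white_apexBlack o.1
  · exact gPsi_adj_white_cycleBlack o.1
  · exact gPsi_adj_succ_white_cycleBlack o.1
  · have := gPsi_adj_white_gray (succ := succ) (clausePair hσ i).1.1
    rwa [(clausePair_spec hσ i).1] at this
  · have := gPsi_adj_white_gray (succ := succ) (clausePair hσ i).2.1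
    rwa [(clausePair_spec hσ i).2.1] at this

lemma var_falseSucc (hsucc : CycleData ψ succ) (o : ψ.FalseOcc σ) :
    (falseSucc hsucc o).1.1.2 = o.1.1.2 :=
  hsucc.1 o.1

lemma falseSucc_ne (hsucc : CycleData ψ succ) (o : ψ.FalseOcc σ) : falseSucc hsucc o ≠ o :=
  fun h => hsucc.apply_ne o.1 (congrArg Subtype.val h)

lemma falseSucc_falseSucc_ne (hsucc : CycleData ψ succ) (o : ψ.FalseOcc σ) :
    falseSucc hsucc (falseSucc hsucc o) ≠ o :=
  fun h => hsucc.apply_apply_ne o.1 (congrArg Subtype.val h)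

lemma clausePair_fst_ne_snd (hσ : ψ.Sat1in3 σ) (i : Fin m) :
    (clausePair hσ i).1 ≠ (clausePair hσ i).2 :=
  fun h => (clausePair_spec hσ i).2.2 (by rw [h])

lemma cycleEdge_ne_clauseEdge (hsucc : CycleData ψ succ) (hσ : ψ.Sat1in3 σ) (o : ψ.FalseOcc σ)
    (i : Fin m) : s(o, falseSucc hsucc o) ≠ s((clausePair hσ i).1, (clausePair hσ i).2) := by
  have := (clausePair_spec hσ i).2.2
  rw [Ne, Sym2.eq_iff]
  rintro (⟨rfl, h⟩ | ⟨rfl, h⟩) <;> rw [← h, var_falseSucc] at this <;> exact this rfl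

lemma edgeEnds_injective (hsucc : CycleData ψ succ) (hσ : ψ.Sat1in3 σ) :
    Injective (edgeEnds hsucc hσ) := by
  rintro (o | o | i) (o' | o' | i') h <;> simp [edgeEnds] at h ⊢
  · exact h
  · rcases h with ⟨rfl, -⟩ | ⟨rfl, h⟩
    exacts [rfl, (falseSucc_falseSucc_ne hsucc o' h).elim]
  · exact cycleEdge_ne_clauseEdge hsucc hσ o i' (Sym2.eq_iff.2 h)
  · exact cycleEdge_ne_clauseEdge hsucc hσ o' i (Sym2.eq_iff.2 h).symm
  · rcases h with ⟨h, -⟩ | ⟨h, -⟩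
    · rw [← (clausePair_spec hσ i).1, h, (clausePair_spec hσ i').1]
    · rw [← (clausePair_spec hσ i).1, h, (clausePair_spec hσ i').2.1]

lemma not_isDiag_edgeEnds (hsucc : CycleData ψ succ) (hσ : ψ.Sat1in3 σ)
    (e : ψ.FalseOcc σ ⊕ ψ.FalseOcc σ ⊕ Fin m) : ¬ (edgeEnds hsucc hσ e).IsDiag := by
  rcases e with o | o | i <;> simp only [edgeEnds, Sym2.mk_isDiag_iff, Option.some_inj]
  exacts [nofun, (falseSucc_ne hsucc o).symm, clausePair_fst_ne_snd hσ i]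

theorem appearsAsSubdivision_falseGraph (hsucc : CycleData ψ succ) (hσ : ψ.Sat1in3 σ) :
    AppearsAsSubdivision 1 (falseGraph hsucc hσ) (GPsi ψ succ) :=
  appearsAsSubdivision_one_fromEdgeSet_range _ whiteNail whiteNail_injective edgeMid
    edgeMid_injective edgeMid_ne_whiteNail (adj_whiteNail_edgeMid hsucc hσ)

theorem ncard_edgeSet_falseGraph (hsucc : CycleData ψ succ) (hσ : ψ.Sat1in3 σ) :
    (falseGraph hsucc hσ).edgeSet.ncard = 5 * m := by
  rw [falseGraph, ncard_edgeSet_fromEdgeSet_range _ (edgeEnds_injective hsucc hσ)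
    (not_isDiag_edgeEnds hsucc hσ), Nat.card_sum, Nat.card_sum, card_falseOcc hσ, Nat.card_fin]
  ring

theorem card_falseGraph_vertices (hσ : ψ.Sat1in3 σ) :
    Nat.card (Option (ψ.FalseOcc σ)) = 2 * m + 1 := by
  rw [Finite.card_option, card_falseOcc hσ]

end PosCnf

/-- If `ψ` has a 1-in-3 satisfying assignment, then some graph `H` with
exactly `2m+1` vertices and `5m` edges appears as a `1`-subdivision in `G(ψ)`; in
particular, `G(ψ)` has a `½`-shallow topological minor of density `5m/(2m+1)`. -/
theorem stmt_4 {p m : ℕ} (ψ : PosCnf p m) (succ : Equiv.Perm ψ.Occ)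
    (hsucc : CycleData ψ succ) (hsat : ∃ σ, ψ.Sat1in3 σ) :
    (∃ (VH : Type) (H : SimpleGraph VH),
      AppearsAsSubdivision 1 H (GPsi ψ succ) ∧
      Nat.card VH = 2 * m + 1 ∧ H.edgeSet.ncard = 5 * m) ∧
    (∃ (VH : Type) (H : SimpleGraph VH),
      IsShallowTopMinor 1 H (GPsi ψ succ) ∧
      graphDensity H = (5 * m : ℚ) / (2 * m + 1)) := by
  obtain ⟨σ, hσ⟩ := hsat
  have hsub := PosCnf.appearsAsSubdivision_falseGraph hsucc hσ
  have hV := PosCnf.card_falseGraph_vertices hσ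
  have hE := PosCnf.ncard_edgeSet_falseGraph hsucc hσ
  refine ⟨⟨_, _, hsub, hV, hE⟩, ⟨_, _, hsub.isShallowTopMinor, ?_⟩⟩
  rw [graphDensity, hE, hV]
  push_cast
  rfl
end

section
/- Suppose m ≥ 3, and let H be a ½-shallow topological minor of G(ψ) of maximum density among all ½-shallow topological minors of G(ψ), and suppose this maximum density is at least 5m/(2m+1). Then in every model of H in G(ψ), the set of nails consists of the apex vertex a together with white vertices only (no gray or black vertex is a nail, and a is a nail). -/
open Finset SimpleGraph

theorem SimpleGraph.Walk.IsPath.adj_or_exists_adj_adj {V : Type*} {G : SimpleGraph V} {a b : V}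
    {W : G.Walk a b} (hW : W.IsPath) (hab : a ≠ b) (hlen : W.length ≤ 2) :
    G.Adj a b ∨ ∃ s ∈ W.support, s ≠ a ∧ s ≠ b ∧ G.Adj a s ∧ G.Adj s b := by
  cases W with
  | nil => exact absurd rfl hab
  | cons h W =>
    cases W with
    | nil => exact Or.inl h
    | cons h' W =>
      cases W with
      | nil =>
        have hnd := hW.support_nodup
        simp only [Walk.support_cons, Walk.support_nil, List.nodup_cons, List.mem_cons,
          List.not_mem_nil] at hnd
        exact Or.inr ⟨_, by simp, by grind, by grind, h, h'⟩
      | cons _ _ => simp at hlen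

theorem SimpleGraph.eq_or_eq_of_edge_adj {V : Type*} {u v y z : V} (h : (edge u v).Adj y z) :
    (y = u ∨ y = v) ∧ (z = u ∨ z = v) := by
  grind

theorem graphDensity_lt_of_card_add_one {V W : Type*} {H : SimpleGraph V} {H' : SimpleGraph W}
    (hd : 2 < graphDensity H) (hV : Nat.card W + 1 = Nat.card V)
    (hE : H.edgeSet.ncard ≤ H'.edgeSet.ncard + 2) : graphDensity H < graphDensity H' := by
  have hn : 2 ≤ Nat.card V := by
    by_contra! h
    interval_cases hc : Nat.card V
    · norm_num [graphDensity, hc] at hd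
    · have : Subsingleton V := (Nat.card_eq_one_iff_unique.1 hc).1
      have hE0 : H.edgeSet = ∅ := Set.eq_empty_of_forall_notMem fun e =>
        e.ind fun a b hab => hab.ne (Subsingleton.elim a b)
      norm_num [graphDensity, hE0] at hd
  unfold graphDensity at hd ⊢
  have hV' : (Nat.card W : ℚ) + 1 = Nat.card V := by exact_mod_cast hV
  have hE' : (H.edgeSet.ncard : ℚ) ≤ H'.edgeSet.ncard + 2 := by exact_mod_cast hE
  have hn' : (2 : ℚ) ≤ Nat.card V := by exact_mod_cast hn
  rw [lt_div_iff₀ (by linarith)] at hd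
  rw [div_lt_div_iff₀ (by linarith) (by linarith)]
  nlinarith

theorem graphDensity_le_of_degree_le {V : Type*} [Fintype V] {H : SimpleGraph V}
    [DecidableRel H.Adj] {k : ℕ} (h : ∀ v, H.degree v ≤ k) : graphDensity H ≤ k / 2 := by
  have hsum : 2 * #H.edgeFinset ≤ Fintype.card V * k := by
    rw [← sum_degrees_eq_twice_card_edges]
    exact (Finset.sum_le_sum fun v _ => h v).trans (by simp)
  rw [graphDensity, Set.ncard_eq_toFinset_card', Nat.card_eq_fintype_card]
  rcases (Fintype.card V).eq_zero_or_pos with h0 | hpos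
  · rw [h0, Nat.cast_zero, div_zero]
    positivity
  · rw [div_le_div_iff₀ (by exact_mod_cast hpos) two_pos]
    exact_mod_cast (by linarith : #H.edgeFinset * 2 ≤ k * Fintype.card V)

theorem finite_of_graphDensity_pos {V : Type*} {H : SimpleGraph V} (hd : 0 < graphDensity H) :
    Finite V := by
  by_contra h
  rw [not_finite_iff_infinite] at h
  simp [graphDensity, Nat.card_eq_zero_of_infinite] at hd

theorem two_lt_five_mul_div {m : ℕ} (hm : 3 ≤ m) : (2 : ℚ) < 5 * m / (2 * m + 1) := by
  have hm' : (3 : ℚ) ≤ m := by exact_mod_cast hm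
  rw [lt_div_iff₀ (by positivity)]
  linarith

theorem ncard_edgeSet_eq_card_edgeFinset {V : Type*} (H : SimpleGraph V) [Fintype H.edgeSet] :
    H.edgeSet.ncard = #H.edgeFinset :=
  Set.ncard_eq_toFinset_card' _

theorem card_compl_singleton_add_one {V : Type*} [Finite V] (x : V) :
    Nat.card ({x}ᶜ : Set V) + 1 = Nat.card V := by
  rw [Nat.card_coe_set_eq, Set.ncard_compl, Set.ncard_singleton]
  have := Nat.card_pos_iff.2 ⟨⟨x⟩, ‹_›⟩
  omega

namespace SubdivModel

variable {VH VG : Type*} {H : SimpleGraph VH} {G : SimpleGraph VG} (M : SubdivModel H G)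

theorem nail_ne_of_adj {u v : VH} (h : H.Adj u v) : M.nail u ≠ M.nail v :=
  fun e => h.ne (M.nail_inj e)

theorem eq_or_eq_of_nail_mem_support {y z t : VH} (h : H.Adj y z)
    (ht : M.nail t ∈ (M.path y z h).support) : M.nail t = M.nail y ∨ M.nail t = M.nail z := by
  by_contra! hne
  exact M.internal_not_nail y z h _ ht hne.1 hne.2 t rfl

/-- The second vertices of the paths leaving `M.nail x` are distinct neighbours of it. -/
theorem degree_le_ncard_neighborSet [Finite VG] (x : VH) [Fintype (H.neighborSet x)] :
    H.degree x ≤ (G.neighborSet (M.nail x)).ncard := by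
  rw [← card_neighborSet_eq_degree, ← Nat.card_eq_fintype_card, ← Nat.card_coe_set_eq]
  have hnil (v : H.neighborSet x) : ¬(M.path x v v.2).Nil :=
    Walk.not_nil_of_ne (M.nail_ne_of_adj v.2)
  refine Nat.card_le_card_of_injective
    (fun v => ⟨(M.path x v v.2).snd, Walk.adj_snd (hnil v)⟩) ?_
  rintro ⟨v, hv : H.Adj x v⟩ ⟨w, hw : H.Adj x w⟩ hvw
  suffices v = w from Subtype.ext this
  by_contra hne
  replace hvw : (M.path x v hv).snd = (M.path x w hw).snd := congrArg Subtype.val hvw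
  have hsx : (M.path x v hv).snd ≠ M.nail x := (Walk.adj_snd (hnil ⟨v, hv⟩)).ne'
  obtain ⟨h1, h2⟩ := M.paths_disjoint x v hv x w hw (by simp [hne, hv.ne'])
    (M.path x v hv).snd (Walk.getVert_mem_support _ _)
    (by rw [hvw]; exact Walk.getVert_mem_support _ _)
  exact hne (M.nail_inj ((h1.resolve_left hsx).symm.trans (h2.resolve_left hsx)))

theorem nail_adj_or_exists_mid {u v : VH} (h : H.Adj u v) (hlen : (M.path u v h).length ≤ 2) :
    G.Adj (M.nail u) (M.nail v) ∨
      ∃ s ∉ Set.range M.nail, G.Adj (M.nail u) s ∧ G.Adj s (M.nail v) := by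
  refine (M.path_isPath u v h).adj_or_exists_adj_adj (M.nail_ne_of_adj h) hlen |>.imp_right ?_
  rintro ⟨s, hs, hsu, hsv, hus, hsv'⟩
  exact ⟨s, fun ⟨t, ht⟩ => M.internal_not_nail u v h s hs hsu hsv t ht.symm, hus, hsv'⟩

def induce (s : Set VH) : SubdivModel (H.induce s) G where
  nail y := M.nail y
  nail_inj _ _ h := Subtype.ext (M.nail_inj h)
  path y z h := M.path y z h
  path_isPath y z h := M.path_isPath y z h
  path_symm y z h := M.path_symm y z h
  internal_not_nail y z h w hw hy hz t := M.internal_not_nail y z h w hw hy hz t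
  paths_disjoint y z h y' z' h' hne := M.paths_disjoint y z h y' z' h'
    fun e => hne (Sym2.map.injective Subtype.val_injective (by simpa using e))

theorem mem_support_inter_mid {c : VG} {y z y' z' : VH} (h : H.Adj y z)
    (hc : c ∉ (M.path y z h).support) {w : VG} (hw : w ∈ (M.path y z h).support)
    (hw' : w ∈ [M.nail y', c, M.nail z']) :
    (w = M.nail y ∨ w = M.nail z) ∧ (w = M.nail y' ∨ w = M.nail z') := by
  have hw'' : w = M.nail y' ∨ w = M.nail z' := by
    simp only [List.mem_cons, List.not_mem_nil, or_false] at hw'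
    rcases hw' with rfl | rfl | rfl
    exacts [Or.inl rfl, absurd hw hc, Or.inr rfl]
  refine ⟨?_, hw''⟩
  rcases hw'' with rfl | rfl <;> exact M.eq_or_eq_of_nail_mem_support h hw

section SupEdge

variable {u v : VH} {c : VG} (hu : G.Adj (M.nail u) c) (hv : G.Adj (M.nail v) c)

open Classical in
noncomputable def supEdgePath (y z : VH) (h : (H ⊔ edge u v).Adj y z) :
    G.Walk (M.nail y) (M.nail z) :=
  if hyz : H.Adj y z then M.path y z hyz
  else
    have hyz' := eq_or_eq_of_edge_adj (h.resolve_left hyz)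
    have hmid {w} (hw : w = u ∨ w = v) : G.Adj (M.nail w) c := by
      rcases hw with rfl | rfl <;> assumption
    .cons (hmid hyz'.1) (.cons (hmid hyz'.2).symm .nil)

theorem supEdgePath_cases (y z : VH) (h : (H ⊔ edge u v).Adj y z) :
    (∃ hyz : H.Adj y z, M.supEdgePath hu hv y z h = M.path y z hyz) ∨
      (s(y, z) = s(u, v) ∧ (M.supEdgePath hu hv y z h).support = [M.nail y, c, M.nail z] ∧
        (M.supEdgePath hu hv y z h).length = 2) := by
  unfold supEdgePath
  split_ifs with hyz
  · exact Or.inl ⟨hyz, rfl⟩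
  · have hyz' := h.resolve_left hyz
    rw [edge_adj] at hyz'
    exact Or.inr ⟨Sym2.eq_iff.2 hyz'.1, rfl, rfl⟩

theorem supEdgePath_symm (y z : VH) (h : (H ⊔ edge u v).Adj y z) :
    M.supEdgePath hu hv z y h.symm = (M.supEdgePath hu hv y z h).reverse := by
  unfold supEdgePath
  by_cases hyz : H.Adj y z
  · rw [dif_pos hyz.symm, dif_pos hyz, M.path_symm]
  · have hzy : ¬H.Adj z y := fun h => hyz h.symm
    rw [dif_neg hzy, dif_neg hyz]
    rfl

noncomputable def supEdge (hc : c ∉ Set.range M.nail)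
    (hfree : ∀ y z (h : H.Adj y z), c ∉ (M.path y z h).support) :
    SubdivModel (H ⊔ edge u v) G where
  nail := M.nail
  nail_inj := M.nail_inj
  path := M.supEdgePath hu hv
  path_isPath y z h := by
    rcases M.supEdgePath_cases hu hv y z h with ⟨hyz, he⟩ | ⟨-, hs, -⟩
    · rw [he]; exact M.path_isPath y z hyz
    · have hcy : M.nail y ≠ c := fun e => hc ⟨y, e⟩
      have hcz : M.nail z ≠ c := fun e => hc ⟨z, e⟩
      have hyz : M.nail y ≠ M.nail z := fun e => h.ne (M.nail_inj e)
      rw [Walk.isPath_def, hs]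
      simp [hcy, hcz.symm, hyz]
  path_symm := M.supEdgePath_symm hu hv
  internal_not_nail y z h w hw hy hz t := by
    rcases M.supEdgePath_cases hu hv y z h with ⟨hyz, he⟩ | ⟨-, hs, -⟩
    · exact M.internal_not_nail y z hyz w (he ▸ hw) hy hz t
    · rw [hs] at hw
      simp only [List.mem_cons, List.not_mem_nil, or_false] at hw
      rcases hw with rfl | rfl | rfl
      exacts [absurd rfl hy, fun e => hc ⟨t, e.symm⟩, absurd rfl hz]
  paths_disjoint y z h y' z' h' hne w hw hw' := by
    rcases M.supEdgePath_cases hu hv y z h with ⟨hyz, he⟩ | ⟨hs, hsupp, -⟩ <;>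
      rcases M.supEdgePath_cases hu hv y' z' h' with ⟨hyz', he'⟩ | ⟨hs', hsupp', -⟩
    · exact M.paths_disjoint y z hyz y' z' hyz' hne w (he ▸ hw) (he' ▸ hw')
    · exact M.mem_support_inter_mid hyz (hfree y z hyz) (he ▸ hw) (hsupp' ▸ hw')
    · exact (M.mem_support_inter_mid hyz' (hfree y' z' hyz') (he' ▸ hw') (hsupp ▸ hw)).symm
    · exact absurd (hs.trans hs'.symm) hne

theorem supEdge_path_length_le (hc : c ∉ Set.range M.nail)
    (hfree : ∀ y z (h : H.Adj y z), c ∉ (M.path y z h).support)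
    (hlen : ∀ y z (h : H.Adj y z), (M.path y z h).length ≤ 2) (y z : VH)
    (h : (H ⊔ edge u v).Adj y z) : ((M.supEdge hu hv hc hfree).path y z h).length ≤ 2 := by
  rcases M.supEdgePath_cases hu hv y z h with ⟨hyz, he⟩ | ⟨-, -, hl⟩
  · exact (congrArg Walk.length he).trans_le (hlen y z hyz)
  · exact hl.le

end SupEdge

end SubdivModel

def DensityBoundsShallowTopMinors {VH VG : Type*} (H : SimpleGraph VH) (G : SimpleGraph VG) :
    Prop :=
  ∀ (VH' : Type) (H' : SimpleGraph VH'),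
    IsShallowTopMinor 1 H' G → graphDensity H' ≤ graphDensity H

namespace DensityBoundsShallowTopMinors

variable {VH : Type} {VG : Type*} [Fintype VH] {H : SimpleGraph VH} [DecidableRel H.Adj]
  {G : SimpleGraph VG}

theorem three_le_degree (hmax : DensityBoundsShallowTopMinors H G)
    (hd : 2 < graphDensity H) (M : SubdivModel H G)
    (hlen : ∀ u v (h : H.Adj u v), (M.path u v h).length ≤ 2) (x : VH) : 3 ≤ H.degree x := by
  classical
  by_contra! hx
  have hminor : IsShallowTopMinor 1 (H.induce {x}ᶜ) G := ⟨M.induce _, fun y z h => hlen y z h⟩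
  refine (hmax _ _ hminor).not_gt (graphDensity_lt_of_card_add_one hd
    (card_compl_singleton_add_one x) ?_)
  rw [ncard_edgeSet_eq_card_edgeFinset, ncard_edgeSet_eq_card_edgeFinset,
    card_edgeFinset_induce_compl_singleton, card_edgeFinset_deleteIncidenceSet]
  omega

theorem adj_of_degree_le_three (hmax : DensityBoundsShallowTopMinors H G)
    (hd : 2 < graphDensity H) (M : SubdivModel H G)
    (hlen : ∀ u v (h : H.Adj u v), (M.path u v h).length ≤ 2) {x u v : VH}
    (hx : H.degree x ≤ 3) (hu : H.Adj x u) (hv : H.Adj x v) (huv : u ≠ v)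
    (hxu : G.Adj (M.nail u) (M.nail x)) (hxv : G.Adj (M.nail v) (M.nail x)) : H.Adj u v := by
  classical
  by_contra hnadj
  let M₀ := M.induce {x}ᶜ
  let u₀ : ({x}ᶜ : Set VH) := ⟨u, hu.ne'⟩
  let v₀ : ({x}ᶜ : Set VH) := ⟨v, hv.ne'⟩
  have hc : M.nail x ∉ Set.range M₀.nail := fun ⟨y, hy⟩ => y.2 (M.nail_inj hy)
  have hfree (y z) (h : (H.induce {x}ᶜ).Adj y z) : M.nail x ∉ (M₀.path y z h).support :=
    fun hmem => M.internal_not_nail y z h _ hmem (fun e => y.2 (M.nail_inj e).symm)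
      (fun e => z.2 (M.nail_inj e).symm) x rfl
  have hminor : IsShallowTopMinor 1 (H.induce {x}ᶜ ⊔ edge u₀ v₀) G :=
    ⟨M₀.supEdge (u := u₀) (v := v₀) hxu hxv hc hfree,
      M₀.supEdge_path_length_le (u := u₀) (v := v₀) hxu hxv hc hfree
        fun y z h => hlen y z h⟩
  refine (hmax _ _ hminor).not_gt (graphDensity_lt_of_card_add_one hd
    (card_compl_singleton_add_one x) ?_)
  rw [ncard_edgeSet_eq_card_edgeFinset, ncard_edgeSet_eq_card_edgeFinset,
    card_edgeFinset_sup_edge (H.induce {x}ᶜ) (s := u₀) (t := v₀) hnadj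
      (fun e => huv (congrArg Subtype.val e)),
    card_edgeFinset_induce_compl_singleton, card_edgeFinset_deleteIncidenceSet]
  omega

end DensityBoundsShallowTopMinors

-- Lets `simp` and `grind` use the constructor lemmas of `Option` and `Sum` on vertices of `G(ψ)`.
attribute [reducible] GPsiV

namespace GPsi

variable {p m : ℕ} {ψ : PosCnf p m} {succ : Equiv.Perm ψ.Occ}

abbrev white (o : ψ.Occ) : GPsiV ψ := some (Sum.inl o)
abbrev gray (ψ : PosCnf p m) (i : Fin m) : GPsiV ψ := some (Sum.inr (Sum.inl i))
abbrev black (o : ψ.Occ) (b : Bool) : GPsiV ψ := some (Sum.inr (Sum.inr (o, b)))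

instance : Finite ψ.Occ := inferInstanceAs (Finite {q : Fin m × Fin p // q.2 ∈ ψ.clause q.1})

theorem adj_black_true {o : ψ.Occ} {y : GPsiV ψ} :
    (GPsi ψ succ).Adj (black o true) y ↔ y = none ∨ y = white o := by
  rw [GPsi, fromRel_adj]
  rcases y with _ | (_ | _ | ⟨_, _⟩) <;> grind

theorem adj_black_false {o : ψ.Occ} {y : GPsiV ψ} :
    (GPsi ψ succ).Adj (black o false) y ↔ y = white o ∨ y = white (succ o) := by
  rw [GPsi, fromRel_adj]
  rcases y with _ | (_ | _ | ⟨_, _⟩) <;> grind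

theorem adj_gray {i : Fin m} {y : GPsiV ψ} :
    (GPsi ψ succ).Adj (gray ψ i) y ↔ ∃ o : ψ.Occ, o.1.1 = i ∧ y = white o := by
  rw [GPsi, fromRel_adj]
  rcases y with _ | (_ | _ | ⟨_, _⟩) <;> grind

theorem adj_white {o : ψ.Occ} {y : GPsiV ψ} :
    (GPsi ψ succ).Adj (white o) y ↔
      y = black o true ∨ y = black o false ∨ y = black (succ.symm o) false ∨
        y = gray ψ o.1.1 := by
  rw [GPsi, fromRel_adj]
  rcases y with _ | (_ | _ | ⟨_, _⟩) <;> grind [Equiv.apply_symm_apply]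

theorem ncard_neighborSet_black_le (o : ψ.Occ) (b : Bool) :
    ((GPsi ψ succ).neighborSet (black o b)).ncard ≤ 2 := by
  classical
  cases b
  · calc _ ≤ (({white o, white (succ o)} : Finset (GPsiV ψ)) : Set (GPsiV ψ)).ncard :=
          Set.ncard_le_ncard fun y hy => by simpa using adj_black_false.1 hy
      _ ≤ 2 := by rw [Set.ncard_coe_finset]; exact Finset.card_le_two
  · calc _ ≤ (({none, white o} : Finset (GPsiV ψ)) : Set (GPsiV ψ)).ncard :=
          Set.ncard_le_ncard fun y hy => by simpa using adj_black_true.1 hy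
      _ ≤ 2 := by rw [Set.ncard_coe_finset]; exact Finset.card_le_two

theorem ncard_neighborSet_white_le (o : ψ.Occ) :
    ((GPsi ψ succ).neighborSet (white o)).ncard ≤ 4 := by
  classical
  calc _ ≤ (({black o true, black o false, black (succ.symm o) false, gray ψ o.1.1} :
          Finset (GPsiV ψ)) : Set (GPsiV ψ)).ncard :=
        Set.ncard_le_ncard fun y hy => by simpa using adj_white.1 hy
    _ ≤ 4 := by rw [Set.ncard_coe_finset]; exact Finset.card_le_four

theorem ncard_neighborSet_gray_le (i : Fin m) :
    ((GPsi ψ succ).neighborSet (gray ψ i)).ncard ≤ 3 := by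
  calc _ ≤ (white '' {o : ψ.Occ | o.1.1 = i}).ncard :=
        Set.ncard_le_ncard fun y hy => by
          obtain ⟨o, ho, rfl⟩ := adj_gray.1 hy
          exact ⟨o, ho, rfl⟩
    _ ≤ {o : ψ.Occ | o.1.1 = i}.ncard := Set.ncard_image_le
    _ ≤ (ψ.clause i : Set (Fin p)).ncard :=
        Set.ncard_le_ncard_of_injOn (fun o => o.1.2) (fun o ho => ho ▸ o.2)
          fun o ho o' ho' h => Subtype.ext (Prod.ext (ho.trans ho'.symm) h)
    _ = 3 := by rw [Set.ncard_coe_finset, ψ.card_eq i]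

theorem not_adj_white_white (o o' : ψ.Occ) : ¬(GPsi ψ succ).Adj (white o) (white o') := by
  simp [adj_white]

theorem eq_gray_of_adj_white_of_adj_white (hsucc : ∀ o, (succ o).1.2 = o.1.2) {o o' : ψ.Occ}
    (hvar : o.1.2 ≠ o'.1.2) {s : GPsiV ψ} (h : (GPsi ψ succ).Adj (white o) s)
    (h' : (GPsi ψ succ).Adj (white o') s) : s = gray ψ o.1.1 := by
  rcases adj_white.1 h with rfl | rfl | rfl | rfl <;>
    rcases adj_white.1 h' with h'' | h'' | h'' | h'' <;>
    grind [Equiv.apply_symm_apply]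

section Model

variable {VH : Type} {H : SimpleGraph VH} (M : SubdivModel H (GPsi ψ succ))

theorem nail_ne_black [Fintype VH] [DecidableRel H.Adj]
    (hmax : DensityBoundsShallowTopMinors H (GPsi ψ succ))
    (hd : 2 < graphDensity H) (hlen : ∀ u v (h : H.Adj u v), (M.path u v h).length ≤ 2)
    (x : VH) (o : ψ.Occ) (b : Bool) : M.nail x ≠ black o b := fun hx =>
  (hmax.three_le_degree hd M hlen x).not_gt <| Nat.lt_succ_of_le
    ((hx ▸ M.degree_le_ncard_neighborSet x).trans (ncard_neighborSet_black_le o b))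

theorem exists_white_of_adj_of_nail_eq_gray
    (hlen : ∀ u v (h : H.Adj u v), (M.path u v h).length ≤ 2)
    (hblack : ∀ y o b, M.nail y ≠ black o b) {x u : VH} {i : Fin m} (hx : M.nail x = gray ψ i)
    (hu : H.Adj x u) : ∃ o : ψ.Occ, o.1.1 = i ∧ M.nail u = white o := by
  rcases M.nail_adj_or_exists_mid hu (hlen x u hu) with h | ⟨s, -, hs, hsu⟩
  · rw [hx] at h
    exact adj_gray.1 h
  · rw [hx] at hs
    obtain ⟨o, rfl, rfl⟩ := adj_gray.1 hs
    rcases adj_white.1 hsu with h | h | h | h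
    iterate 3 exact absurd h (hblack u _ _)
    exact absurd (M.nail_inj (h.trans hx.symm)) hu.ne'

theorem nail_ne_gray [Fintype VH] [DecidableRel H.Adj] (hsucc : ∀ o, (succ o).1.2 = o.1.2)
    (hmax : DensityBoundsShallowTopMinors H (GPsi ψ succ))
    (hd : 2 < graphDensity H) (hlen : ∀ u v (h : H.Adj u v), (M.path u v h).length ≤ 2)
    (hblack : ∀ y o b, M.nail y ≠ black o b) (x : VH) (i : Fin m) : M.nail x ≠ gray ψ i := by
  intro hx
  have hdeg : H.degree x ≤ 3 :=
    (hx ▸ M.degree_le_ncard_neighborSet x).trans (ncard_neighborSet_gray_le i)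
  obtain ⟨u, hu, v, hv, huv⟩ : ∃ u, H.Adj x u ∧ ∃ v, H.Adj x v ∧ u ≠ v := by
    have h := hmax.three_le_degree hd M hlen x
    rw [← card_neighborFinset_eq_degree] at h
    simpa using Finset.one_lt_card.1 (by omega : 1 < #(H.neighborFinset x))
  obtain ⟨o, rfl, hnu⟩ := exists_white_of_adj_of_nail_eq_gray M hlen hblack hx hu
  obtain ⟨o', ho', hnv⟩ := exists_white_of_adj_of_nail_eq_gray M hlen hblack hx hv
  have hvar : o.1.2 ≠ o'.1.2 := fun e =>
    huv (M.nail_inj (by rw [hnu, hnv, Subtype.ext (Prod.ext ho'.symm e)]))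
  have hadj : H.Adj u v := hmax.adj_of_degree_le_three hd M hlen hdeg hu hv huv
    (by rw [hnu, hx]; exact adj_white.2 (by simp))
    (by rw [hnv, hx, ← ho']; exact adj_white.2 (by simp))
  rcases M.nail_adj_or_exists_mid hadj (hlen u v hadj) with h | ⟨s, hs, hus, hsv⟩
  · rw [hnu, hnv] at h
    exact not_adj_white_white _ _ h
  · rw [hnu] at hus
    rw [hnv] at hsv
    exact hs ⟨x, by rw [hx, eq_gray_of_adj_white_of_adj_white hsucc hvar hus hsv.symm]⟩

end Model

end GPsi

theorem stmt_7_general {p m : ℕ} (ψ : PosCnf p m) (succ : Equiv.Perm ψ.Occ)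
    (hsucc : CycleData ψ succ) (hm : 3 ≤ m)
    {VH : Type} (H : SimpleGraph VH)
    (hmax : ∀ (VH' : Type) (H' : SimpleGraph VH'),
      IsShallowTopMinor 1 H' (GPsi ψ succ) → graphDensity H' ≤ graphDensity H)
    (hdens : (5 * m : ℚ) / (2 * m + 1) ≤ graphDensity H) :
    ∀ M : SubdivModel H (GPsi ψ succ),
      (∀ u v (h : H.Adj u v), (M.path u v h).length ≤ 2) →
      (none ∈ Set.range M.nail ∧
        ∀ x : VH, M.nail x = none ∨ ∃ o : ψ.Occ, M.nail x = some (Sum.inl o)) := by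
  intro M hlen
  have hd : 2 < graphDensity H := (two_lt_five_mul_div hm).trans_le hdens
  have : Finite VH := finite_of_graphDensity_pos (two_pos.trans hd)
  have : Fintype VH := Fintype.ofFinite VH
  classical
  have hblack := GPsi.nail_ne_black M hmax hd hlen
  have hnails (x : VH) : M.nail x = none ∨ ∃ o : ψ.Occ, M.nail x = some (Sum.inl o) := by
    rcases hx : M.nail x with _ | (o | i | ⟨o, b⟩)
    exacts [Or.inl rfl, Or.inr ⟨o, rfl⟩,
      absurd hx (GPsi.nail_ne_gray M hsucc.1 hmax hd hlen hblack x i), absurd hx (hblack x o b)]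
  refine ⟨by_contra fun hapex => ?_, hnails⟩
  have hdeg (x : VH) : H.degree x ≤ 4 := by
    obtain ⟨o, ho⟩ := (hnails x).resolve_left fun h => hapex ⟨x, h⟩
    exact (ho ▸ M.degree_le_ncard_neighborSet x).trans (GPsi.ncard_neighborSet_white_le o)
  have hd' : graphDensity H ≤ 2 := (graphDensity_le_of_degree_le hdeg).trans_eq (by norm_num)
  exact hd'.not_gt hd

/-- Suppose `m ≥ 3` and `H` is a `½`-shallow topological minor of `G(ψ)`
of maximum density among all `½`-shallow topological minors of `G(ψ)`, this maximum
density being at least `5m/(2m+1)`. Then in every model of `H` in `G(ψ)`, the set of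
nails consists of the apex vertex `a` (= `none`) together with white vertices only. -/
theorem stmt_7 {p m : ℕ} (ψ : PosCnf p m) (succ : Equiv.Perm ψ.Occ)
    (hsucc : CycleData ψ succ) (hm : 3 ≤ m)
    {VH : Type} (H : SimpleGraph VH)
    (hH : IsShallowTopMinor 1 H (GPsi ψ succ))
    (hmax : ∀ (VH' : Type) (H' : SimpleGraph VH'),
      IsShallowTopMinor 1 H' (GPsi ψ succ) → graphDensity H' ≤ graphDensity H)
    (hdens : (5 * m : ℚ) / (2 * m + 1) ≤ graphDensity H) :
    ∀ M : SubdivModel H (GPsi ψ succ),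
      (∀ u v (h : H.Adj u v), (M.path u v h).length ≤ 2) →
      (none ∈ Set.range M.nail ∧
        ∀ x : VH, M.nail x = none ∨ ∃ o : ψ.Occ, M.nail x = some (Sum.inl o)) :=
  stmt_7_general ψ succ hsucc hm H hmax hdens
end

section
/- Let m ≥ 3 be an integer and let v₃, v₄ be nonnegative integers satisfying v₄ ≤ 2m and v₃ + v₄ ≤ 3m. If (4v₃ + 5v₄) / (2(v₃ + v₄ + 1)) ≥ 5m/(2m+1), then v₃ = 0 and v₄ = 2m. -/
/-- Let `m ≥ 3` and let `v₃`, `v₄` be nonnegative integers with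
`v₄ ≤ 2m` and `v₃ + v₄ ≤ 3m`. If `(4v₃ + 5v₄) / (2(v₃ + v₄ + 1)) ≥ 5m/(2m+1)`,
then `v₃ = 0` and `v₄ = 2m`. -/
theorem stmt_8 (m v₃ v₄ : ℕ) (hm : 3 ≤ m) (h₄ : v₄ ≤ 2 * m) (h₃₄ : v₃ + v₄ ≤ 3 * m)
    (hdens : (5 * m : ℚ) / (2 * m + 1) ≤
      (4 * v₃ + 5 * v₄ : ℚ) / (2 * (v₃ + v₄ + 1))) :
    v₃ = 0 ∧ v₄ = 2 * m := by
  have hd1 : (0:ℚ) < 2 * m + 1 := by positivity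
  have hd2 : (0:ℚ) < 2 * ((v₃:ℚ) + v₄ + 1) := by positivity
  rw [div_le_div_iff₀ hd1 hd2] at hdens
  have hk : 5 * m * (2 * (v₃ + v₄ + 1)) ≤ (4 * v₃ + 5 * v₄) * (2 * m + 1) := by
    exact_mod_cast hdens
  have h5 : 2 * m * v₃ ≤ 4 * v₃ := by nlinarith
  have h6 : v₃ ≤ 0 := by nlinarith
  have h7 : v₃ = 0 := Nat.le_zero.mp h6
  subst h7
  constructor
  · rfl
  · nlinarith
end

section
/- Let d ≥ 1 and let G be a connected finite d-regular simple graph. Then the density of G is exactly d/2, and every subgraph H of G with at least one vertex and H ≠ G has density strictly less than d/2. -/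
/-- The density `‖H‖/|H|` of a subgraph of a host graph. -/
noncomputable def subgraphDensity {W : Type*} {G : SimpleGraph W} (H : G.Subgraph) : ℚ :=
  (H.edgeSet.ncard : ℚ) / (H.verts.ncard : ℚ)

/-!
By handshaking, `2‖H‖ = ∑_{v ∈ H} deg_H v ≤ d |H|`, with equality for `H = G`. If `H ≠ G`, then
either `H` misses an edge of `G` at one of its vertices, or `H` misses a vertex and connectivity
gives an edge of `G` leaving `H`; either way some vertex of `H` has `deg_H v < d`, so the
inequality is strict.
-/

namespace SimpleGraph

variable {V : Type*} {G : SimpleGraph V}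

namespace Subgraph

lemma sum_ncard_neighborSet_eq_two_mul_ncard_edgeSet [Fintype V] (H : G.Subgraph) :
    ∑ v, (H.neighborSet v).ncard = 2 * H.edgeSet.ncard := by
  classical
  rw [← H.edgeSet_spanningCoe, ← coe_edgeFinset, Set.ncard_coe_finset,
    ← H.spanningCoe.sum_degrees_eq_twice_card_edges]
  refine Finset.sum_congr rfl fun v _ ↦ ?_
  rw [← card_neighborSet_eq_degree, ← Nat.card_eq_fintype_card, Nat.card_coe_set_eq]
  rfl

lemma ncard_neighborSet_of_notMem_verts (H : G.Subgraph) {v : V} (hv : v ∉ H.verts) :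
    (H.neighborSet v).ncard = 0 := by
  rw [Set.eq_empty_of_forall_notMem (s := H.neighborSet v) fun _ hw ↦ hv (H.edge_vert hw),
    Set.ncard_empty]

lemma ncard_neighborSet_le [Finite V] (H : G.Subgraph) (v : V) :
    (H.neighborSet v).ncard ≤ (G.neighborSet v).ncard :=
  Set.ncard_le_ncard (H.neighborSet_subset v)

lemma exists_adj_not_adj_of_ne_top (hG : G.Connected) {H : G.Subgraph} (hne : H.verts.Nonempty)
    (hH : H ≠ ⊤) : ∃ v ∈ H.verts, ∃ w, G.Adj v w ∧ ¬ H.Adj v w := by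
  by_cases hverts : H.verts = Set.univ
  · by_contra! hall
    refine hH (Subgraph.ext hverts (funext₂ fun v w ↦ propext ⟨fun h ↦ H.adj_sub h, fun h ↦ ?_⟩))
    exact hall v (hverts ▸ Set.mem_univ v) w h
  · obtain ⟨u, hu⟩ := hne
    obtain ⟨w, hw⟩ := (Set.ne_univ_iff_exists_notMem _).1 hverts
    obtain ⟨e, -, he, hew⟩ := (hG.preconnected u w).some.exists_boundary_dart H.verts hu hw
    exact ⟨e.fst, he, e.snd, e.adj, fun h ↦ hew h.snd_mem⟩

lemma exists_ncard_neighborSet_lt [Finite V] (hG : G.Connected) {H : G.Subgraph}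
    (hne : H.verts.Nonempty) (hH : H ≠ ⊤) :
    ∃ v ∈ H.verts, (H.neighborSet v).ncard < (G.neighborSet v).ncard := by
  obtain ⟨v, hv, w, hGvw, hHvw⟩ := exists_adj_not_adj_of_ne_top hG hne hH
  exact ⟨v, hv, Set.ncard_lt_ncard
    ((Set.ssubset_iff_of_subset (H.neighborSet_subset v)).2 ⟨w, hGvw, hHvw⟩)⟩

lemma two_mul_ncard_edgeSet_lt [Fintype V] {d : ℕ} (hG : G.Connected)
    (hreg : ∀ v, (G.neighborSet v).ncard = d) {H : G.Subgraph} (hne : H.verts.Nonempty) (hH : H ≠ ⊤) :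
    2 * H.edgeSet.ncard < d * H.verts.ncard := by
  classical
  obtain ⟨v, hv, hlt⟩ := exists_ncard_neighborSet_lt hG hne hH
  rw [← sum_ncard_neighborSet_eq_two_mul_ncard_edgeSet, Set.ncard_eq_toFinset_card',
    ← Finset.sum_subset (Finset.subset_univ H.verts.toFinset)
      fun v _ hv ↦ H.ncard_neighborSet_of_notMem_verts fun hv' ↦ hv (Set.mem_toFinset.2 hv'),
    mul_comm, ← smul_eq_mul, ← Finset.sum_const]
  exact Finset.sum_lt_sum (fun u _ ↦ hreg u ▸ H.ncard_neighborSet_le u)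
    ⟨v, Set.mem_toFinset.2 hv, hreg v ▸ hlt⟩

end Subgraph

lemma two_mul_ncard_edgeSet_eq [Fintype V] {d : ℕ} (hreg : ∀ v, (G.neighborSet v).ncard = d) :
    2 * G.edgeSet.ncard = d * Nat.card V := by
  rw [← Subgraph.edgeSet_top, ← Subgraph.sum_ncard_neighborSet_eq_two_mul_ncard_edgeSet]
  simp [hreg, mul_comm]

end SimpleGraph

theorem stmt_12_general (V : Type) [Fintype V] (d : ℕ) (G : SimpleGraph V)
    (hconn : G.Connected) (hreg : ∀ v : V, (G.neighborSet v).ncard = d) :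
    graphDensity G = (d : ℚ) / 2 ∧
    ∀ H : G.Subgraph, H.verts.Nonempty → H ≠ ⊤ → subgraphDensity H < (d : ℚ) / 2 := by
  have := hconn.nonempty
  refine ⟨?_, fun H hne hH ↦ ?_⟩
  · have hedges : (2 * G.edgeSet.ncard : ℚ) = d * Nat.card V := by
      exact_mod_cast G.two_mul_ncard_edgeSet_eq hreg
    rw [graphDensity, div_eq_div_iff (Nat.cast_pos.2 Nat.card_pos).ne' two_ne_zero]
    linarith
  · have hedges : (2 * H.edgeSet.ncard : ℚ) < d * H.verts.ncard := by
      exact_mod_cast H.two_mul_ncard_edgeSet_lt hconn hreg hne hH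
    have hverts : (0 : ℚ) < H.verts.ncard := by exact_mod_cast hne.ncard_pos
    rw [subgraphDensity, div_lt_div_iff₀ hverts two_pos]
    linarith

/-- Let `d ≥ 1` and let `G` be a connected finite `d`-regular simple
graph. Then the density of `G` is exactly `d/2`, and every subgraph `H` of `G` with at
least one vertex and `H ≠ G` has density strictly less than `d/2`. -/
theorem stmt_12 (V : Type) [Fintype V] (d : ℕ) (hd : 1 ≤ d) (G : SimpleGraph V)
    (hconn : G.Connected) (hreg : ∀ v : V, (G.neighborSet v).ncard = d) :
    graphDensity G = (d : ℚ) / 2 ∧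
    ∀ H : G.Subgraph, H.verts.Nonempty → H ≠ ⊤ → subgraphDensity H < (d : ℚ) / 2 :=
  stmt_12_general V d G hconn hreg
end
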